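/- arXiv:2310.14986 — 8 statements merged into one kernel-verified Lean document; each statement's English description precedes it below -/
import Mathlib

section
/- Let f : ℕ → ℕ be a function such that the series ∑_{k=0}^∞ 2^{−f(k)} converges, and let σ : ℕ → ℕ be a bijection. Then for all n ∈ ℕ one has ∑_{k=n}^∞ 2^{−f*(k)} ≤ ∑_{k=n}^∞ 2^{−f(σ(k))}, where f* is the non-decreasing rearrangement of f. -/
/-!
Since both `f` and `f*` have finite fibres of equal sizes, `f ∘ σ` is a rearrangement
`k ↦ f* (e k)` of `f*` along a bijection `e` of `ℕ`. The tail `∑_{k ≥ n}` of a rearrangement is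
the full sum minus `∑_{k < n}`, and among `n`-element index sets the initial segment `range n`
maximizes the sum of the antitone sequence `2^{-f*}`.
-/

open Filter

/-- A function `f : ℕ → ℕ` tends to infinity. -/
def TendsToInfinity (f : ℕ → ℕ) : Prop := ∀ c : ℕ, ∃ m : ℕ, ∀ k ≥ m, c < f k

/-- `uf f n` is the number of `k` with `f k = n`. -/
noncomputable def uf (f : ℕ → ℕ) (n : ℕ) : ℕ := Nat.card {k : ℕ | f k = n}

/-- A series of reals converges computably: it has a limit together with a computable
modulus of convergence for the sequence of partial sums. -/
def ConvergesComputably (a : ℕ → ℝ) : Prop :=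
  ∃ (x : ℝ) (s : ℕ → ℕ), Computable s ∧
    ∀ n : ℕ, ∀ m ≥ s n, |x - ∑ k ∈ Finset.range m, a k| ≤ (2:ℝ)^(-(n:ℤ))

/-- `f` is a name for `x` if `∑_k 2^{-f k} = x`. -/
def IsName (f : ℕ → ℕ) (x : ℝ) : Prop := HasSum (fun k => (2:ℝ)^(-(f k : ℤ))) x

/-- A real is reordered computable if it has a computable name `f` such that
`∑_k (uf f k)·2^{-k}` converges computably. -/
def ReorderedComputable (x : ℝ) : Prop :=
  ∃ f : ℕ → ℕ, Computable f ∧ IsName f x ∧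
    ConvergesComputably (fun k => (uf f k : ℝ) * (2:ℝ)^(-(k:ℤ)))

/-- A real is left-computable if some computable strictly increasing sequence of
rationals converges to it. -/
def LeftComputable (x : ℝ) : Prop :=
  ∃ q : ℕ → ℚ, Computable q ∧ StrictMono q ∧
    Tendsto (fun n => (q n : ℝ)) atTop (nhds x)

/-- A real is computably approximable if some computable sequence of rationals
converges to it. -/
def ComputablyApproximable (x : ℝ) : Prop :=
  ∃ q : ℕ → ℚ, Computable q ∧ Tendsto (fun n => (q n : ℝ)) atTop (nhds x)

/-- A real is computable if some computable sequence of rationals approximates it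
with error at most `2^{-n}`. -/
def ComputableReal (x : ℝ) : Prop :=
  ∃ q : ℕ → ℚ, Computable q ∧ ∀ n : ℕ, |x - (q n : ℝ)| ≤ (2:ℝ)^(-(n:ℤ))

/-- Solovay reducibility on left-computable reals. -/
def SolovayReducible (x y : ℝ) : Prop :=
  ∀ yq : ℕ → ℚ, Computable yq → StrictMono yq →
    Tendsto (fun n => (yq n : ℝ)) atTop (nhds y) →
    ∃ xq : ℕ → ℚ, Computable xq ∧ StrictMono xq ∧
      Tendsto (fun n => (xq n : ℝ)) atTop (nhds x) ∧
      ∃ c : ℝ, 0 < c ∧ ∀ n : ℕ, x - (xq n : ℝ) ≤ c * (y - (yq n : ℝ))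

/-- A set of naturals is computably enumerable: empty or the range of a computable function. -/
def CE (A : Set ℕ) : Prop := A = ∅ ∨ ∃ f : ℕ → ℕ, Computable f ∧ A = Set.range f

/-- `xA A = ∑_{n ∈ A} 2^{-(n+1)}`. -/
noncomputable def xA (A : Set ℕ) : ℝ := ∑' n : A, (2:ℝ)^(-((n : ℕ) : ℤ) - 1)

/-- A real is strongly left-computable if it equals `xA A` for a c.e. set `A`. -/
def StronglyLeftComputable (x : ℝ) : Prop := ∃ A : Set ℕ, CE A ∧ xA A = x

/-- A real is regular if it is a finite sum of strongly left-computable reals. -/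
def Regular (x : ℝ) : Prop :=
  ∃ (n : ℕ) (s : Fin n → ℝ), (∀ i, StronglyLeftComputable (s i)) ∧ (∑ i, s i) = x

/-- An infinite set of naturals is immune if it has no infinite c.e. subset. -/
def Immune (A : Set ℕ) : Prop :=
  A.Infinite ∧ ∀ B : Set ℕ, B ⊆ A → B.Infinite → ¬ CE B

/-- A real is nearly computable if some computable sequence of rationals converges to it
such that along every computable strictly increasing function the consecutive differences
converge with a computable modulus of convergence. -/
def NearlyComputable (x : ℝ) : Prop :=
  ∃ q : ℕ → ℚ, Computable q ∧ Tendsto (fun n => (q n : ℝ)) atTop (nhds x) ∧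
    ∀ s : ℕ → ℕ, Computable s → StrictMono s →
      ∃ (L : ℝ) (m : ℕ → ℕ), Computable m ∧
        ∀ n : ℕ, ∀ k ≥ m n, |((q (s (k+1)) : ℝ) - (q (s k) : ℝ)) - L| ≤ (2:ℝ)^(-(n:ℤ))

/-- A real is regainingly approximable if some computable strictly increasing sequence of
rationals converges to it and comes `2^{-n}`-close infinitely often. -/
def RegaininglyApproximable (x : ℝ) : Prop :=
  ∃ q : ℕ → ℚ, Computable q ∧ StrictMono q ∧
    Tendsto (fun n => (q n : ℝ)) atTop (nhds x) ∧
    ∀ m : ℕ, ∃ n ≥ m, x - (q n : ℝ) ≤ (2:ℝ)^(-(n:ℤ))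

/-- `limsup_n (a n)^{1/n}`, computed in the extended nonnegative reals. -/
noncomputable def rootLimsup (a : ℕ → ℕ) : ENNReal :=
  Filter.limsup (fun n => (a n : ENNReal) ^ (1 / (n:ℝ))) Filter.atTop

/-- The characteristic dyadic value of `x`: the infimum of `rootLimsup (uf f)` over all
computable names `f` for `x`. -/
noncomputable def varsigma (x : ℝ) : ENNReal :=
  ⨅ (f : ℕ → ℕ) (_ : Computable f ∧ IsName f x), rootLimsup (uf f)

open Finset

theorem Antitone.sum_le_sum_range_card {M : Type*} [AddCommMonoid M] [PartialOrder M]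
    [IsOrderedAddMonoid M] {a : ℕ → M} (ha : Antitone a) (s : Finset ℕ) :
    ∑ k ∈ s, a k ≤ ∑ k ∈ range #s, a k := by
  induction s using Finset.induction_on_max with
  | empty => simp
  | insert m s hlt ih =>
    have hm : m ∉ s := fun h => (hlt m h).false
    have hcard : #s ≤ m := by
      simpa using card_le_card (fun x hx => mem_range.2 (hlt x hx) : s ⊆ range m)
    rw [sum_insert hm, card_insert_of_notMem hm, sum_range_succ, add_comm]
    exact add_le_add ih (ha hcard)

theorem Antitone.tsum_nat_add_le_tsum_comp_equiv_nat_add {a : ℕ → ℝ} (ha : Antitone a)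
    (hsum : Summable a) (e : ℕ ≃ ℕ) (n : ℕ) :
    ∑' k, a (n + k) ≤ ∑' k, a (e (n + k)) := by
  have hsum_e : Summable (a ∘ e) := e.summable_iff.2 hsum
  have htail {b : ℕ → ℝ} (hb : Summable b) : ∑' k, b (n + k) = ∑' k, b k - ∑ k ∈ range n, b k := by
    simp only [← hb.sum_add_tsum_nat_add n, add_comm n, add_sub_cancel_left]
  have hhead : ∑ k ∈ range n, a (e k) ≤ ∑ k ∈ range n, a k := by
    simpa [sum_map] using ha.sum_le_sum_range_card ((range n).map e.toEmbedding)
  have htail_e := htail hsum_e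
  simp only [Function.comp_apply, e.tsum_eq a] at htail_e
  linarith [htail hsum]

theorem Filter.Tendsto.finite_setOf_apply_eq {α β : Type*} [Preorder β] [NoTopOrder β]
    {f : α → β} (hf : Tendsto f cofinite atTop) (b : β) : {a | f a = b}.Finite := by
  simpa using eventually_cofinite.1 (hf.eventually_ne_atTop b)

theorem Summable.tendsto_cofinite_atTop_of_zpow_neg {α : Type*} {f : α → ℕ} {b : ℝ} (hb : 1 < b)
    (hf : Summable fun k => b ^ (-(f k : ℤ))) : Tendsto f cofinite atTop := by
  refine tendsto_atTop.2 fun v => ?_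
  filter_upwards [hf.tendsto_cofinite_zero.eventually (gt_mem_nhds (zpow_pos (by linarith) (-v : ℤ)))]
    with k hk
  have := (zpow_lt_zpow_iff_right₀ hb).1 hk
  omega

theorem exists_equiv_apply_eq_of_card_fiber_eq {α β γ : Type*} {f : α → γ} {g : β → γ}
    (hf : ∀ c, {a | f a = c}.Finite) (hg : ∀ c, {b | g b = c}.Finite)
    (hcard : ∀ c, Nat.card {a | f a = c} = Nat.card {b | g b = c}) :
    ∃ e : α ≃ β, ∀ a, g (e a) = f a := by
  have hfiber (c : γ) : Nonempty ({a // f a = c} ≃ {b // g b = c}) := by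
    have : Finite {a // f a = c} := (hf c).to_subtype
    have : Finite {b // g b = c} := (hg c).to_subtype
    exact Finite.card_eq.1 (hcard c)
  exact ⟨Equiv.ofFiberEquiv fun c => (hfiber c).some, Equiv.ofFiberEquiv_map _⟩

/-- the non-decreasing rearrangement of a convergent dyadic series has
the fastest tails among all rearrangements. -/
theorem stmt0 (f : ℕ → ℕ) (hf : Summable (fun k => (2:ℝ)^(-(f k : ℤ))))
    (σ : ℕ → ℕ) (hσ : Function.Bijective σ)
    (fstar : ℕ → ℕ) (hmono : Monotone fstar) (hunb : ∀ c : ℕ, ∃ n : ℕ, c < fstar n)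
    (hu : uf fstar = uf f) :
    ∀ n : ℕ,
      (∑' k : ℕ, (2:ℝ)^(-(fstar (n + k) : ℤ))) ≤ ∑' k : ℕ, (2:ℝ)^(-(f (σ (n + k)) : ℤ)) := by
  intro n
  have hfstar_tendsto : Tendsto fstar cofinite atTop := by
    rw [Nat.cofinite_eq_atTop]
    exact hmono.tendsto_atTop_atTop fun c => (hunb c).imp fun _ => le_of_lt
  have hfstar_fiber := hfstar_tendsto.finite_setOf_apply_eq
  have hf_fiber := (hf.tendsto_cofinite_atTop_of_zpow_neg one_lt_two).finite_setOf_apply_eq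
  obtain ⟨τ, hτ⟩ := exists_equiv_apply_eq_of_card_fiber_eq hf_fiber hfstar_fiber
    (fun c => (congrFun hu c).symm)
  have hanti : Antitone fun k => (2:ℝ) ^ (-(fstar k : ℤ)) := fun i j hij =>
    zpow_le_zpow_right₀ one_le_two (by simpa using hmono hij)
  have hsum : Summable fun k => (2:ℝ) ^ (-(fstar k : ℤ)) := by
    refine τ.summable_iff.1 ?_
    simpa [Function.comp_def, hτ] using hf
  simpa [hτ] using hanti.tsum_nat_add_le_tsum_comp_equiv_nat_add hsum
    ((Equiv.ofBijective σ hσ).trans τ) n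
end

section
/- Let f : ℕ → ℕ be a function that tends to infinity. Then the following are equivalent: (1) there is a bijection σ : ℕ → ℕ such that the series ∑_{k=0}^∞ 2^{−f(σ(k))} converges computably; (2) the series ∑_{k=0}^∞ 2^{−f*(k)} converges computably, where f* is the non-decreasing rearrangement of f; (3) the series ∑_{k=0}^∞ u_f(k)·2^{−k} converges computably. -/
open Filter

/-!
Everything is measured by tails in `ℝ≥0∞`: a nonnegative series converges computably iff there
is a computable `s` with `∑_{k ≥ s n} a k ≤ 2⁻ⁿ`. Grouping `∑ 2^{-h k}` by the value of `h` gives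
`∑_{k : M ≤ h k} 2^{-h k} = ∑_{j ≥ M} u_h(j) 2^{-j}`.

If `∑ 2^{-h k}` has modulus `s`, the grouped tail from `M` exceeds the tail after the first `m`
terms by at most `m 2^{-M}`, so `n + 1 + s (n + 1)` is a modulus of the grouped series. Conversely,
if `h` is non-decreasing and `∑ 2^{-h k} < K`, then `h (K 2^M) ≥ M`, as otherwise the first `K 2^M`
terms alone would add up to `K`; so past `K 2^{t n}` the series is dominated by the grouped tail
from `t n`. Finally `f` can be rearranged into `f*` since their fibres have the same finite sizes.
-/

open Topology ENNReal

section Tails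

lemma two_zpow_neg_natCast (n : ℕ) : (2 : ℝ) ^ (-(n : ℤ)) = 2⁻¹ ^ n := by
  rw [zpow_neg, zpow_natCast, inv_pow]

lemma ofReal_two_zpow_neg (n : ℕ) : ENNReal.ofReal ((2 : ℝ) ^ (-(n : ℤ))) = 2⁻¹ ^ n := by
  rw [two_zpow_neg_natCast, ENNReal.ofReal_pow (by norm_num), ENNReal.ofReal_inv_of_pos two_pos,
    ENNReal.ofReal_ofNat]

lemma natCast_mul_two_inv_pow_add_le (m c : ℕ) :
    (m : ℝ≥0∞) * 2⁻¹ ^ (c + m) ≤ 2⁻¹ ^ c := by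
  have hm : (m : ℝ≥0∞) * 2⁻¹ ^ m ≤ 1 :=
    calc (m : ℝ≥0∞) * 2⁻¹ ^ m ≤ 2 ^ m * 2⁻¹ ^ m := by
          gcongr
          exact_mod_cast Nat.lt_two_pow_self.le
      _ = 1 := by rw [← mul_pow, ENNReal.mul_inv_cancel two_ne_zero ofNat_ne_top, one_pow]
  calc (m : ℝ≥0∞) * 2⁻¹ ^ (c + m) = 2⁻¹ ^ c * (m * 2⁻¹ ^ m) := by ring
    _ ≤ 2⁻¹ ^ c := mul_le_of_le_one_right' hm

lemma ENNReal.antitone_tsum_nat_add (F : ℕ → ℝ≥0∞) : Antitone fun m => ∑' k, F (k + m) := by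
  intro m m' h
  obtain ⟨d, rfl⟩ := Nat.exists_eq_add_of_le h
  simpa only [add_comm m d, ← add_assoc] using
    ENNReal.tsum_comp_le_tsum_of_injective (add_left_injective d) fun k => F (k + m)

variable {a : ℕ → ℝ}

lemma tsum_ofReal_nat_add_of_hasSum (ha : ∀ k, 0 ≤ a k) {x : ℝ} (hx : HasSum a x) (m : ℕ) :
    ∑' k, ENNReal.ofReal (a (k + m)) = ENNReal.ofReal (x - ∑ k ∈ Finset.range m, a k) := by
  have h := (hasSum_nat_add_iff' m).2 hx
  rw [← ENNReal.ofReal_tsum_of_nonneg (fun k => ha _) h.summable, h.tsum_eq]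

theorem convergesComputably_iff_tsum_ofReal_le (ha : ∀ k, 0 ≤ a k) :
    ConvergesComputably a ↔
      ∃ s : ℕ → ℕ, Computable s ∧ ∀ n, ∑' k, ENNReal.ofReal (a (k + s n)) ≤ 2⁻¹ ^ n := by
  constructor
  · rintro ⟨x, s, hs, hx⟩
    have hlim : Tendsto (fun m => ∑ k ∈ Finset.range m, a k) atTop (𝓝 x) := by
      refine Metric.tendsto_atTop.2 fun ε hε => ?_
      obtain ⟨n, hn⟩ := exists_pow_lt_of_lt_one hε (by norm_num : (2⁻¹ : ℝ) < 1)
      refine ⟨s n, fun m hm => ?_⟩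
      rw [Real.dist_eq, abs_sub_comm]
      exact (hx n m hm).trans_lt (two_zpow_neg_natCast n ▸ hn)
    refine ⟨s, hs, fun n => ?_⟩
    rw [tsum_ofReal_nat_add_of_hasSum ha ((hasSum_iff_tendsto_nat_of_nonneg ha x).2 hlim),
      ← ofReal_two_zpow_neg]
    exact ENNReal.ofReal_le_ofReal (le_of_abs_le (hx n _ le_rfl))
  · rintro ⟨s, hs, hsmall⟩
    have hsum : Summable a := by
      refine (summable_nat_add_iff (s 0)).1 ?_
      simpa only [ENNReal.toReal_ofReal (ha _)] using
        ENNReal.summable_toReal ((hsmall 0).trans_lt (pow_lt_top (by norm_num))).ne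
    refine ⟨∑' k, a k, s, hs, fun n m hm => ?_⟩
    rw [abs_of_nonneg (sub_nonneg.2 (hsum.sum_le_tsum _ fun k _ => ha k)),
      ← ENNReal.ofReal_le_ofReal_iff (by positivity), ofReal_two_zpow_neg,
      ← tsum_ofReal_nat_add_of_hasSum ha hsum.hasSum]
    exact (ENNReal.antitone_tsum_nat_add (fun k => ENNReal.ofReal (a k)) hm).trans (hsmall n)

end Tails

section Fibers

variable {h : ℕ → ℕ}

theorem tsum_comp_eq_tsum_uf_mul (hfin : ∀ j, {k | h k = j}.Finite) (g : ℕ → ℝ≥0∞) :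
    ∑' k, g (h k) = ∑' j, uf h j * g j := by
  rw [← (Equiv.sigmaFiberEquiv h).tsum_eq, ENNReal.tsum_sigma']
  refine tsum_congr fun j => ?_
  have : Finite {k // h k = j} := (hfin j).to_subtype
  calc ∑' k : {k // h k = j}, g (h k) = ∑' _ : {k // h k = j}, g j :=
        tsum_congr fun k => by rw [k.2]
    _ = uf h j * g j := by
        rw [ENNReal.tsum_const, ENat.card_eq_coe_natCard]
        rfl

theorem tsum_uf_mul_nat_add_eq (hfin : ∀ j, {k | h k = j}.Finite) (M : ℕ) :
    ∑' j, (uf h (j + M) : ℝ≥0∞) * 2⁻¹ ^ (j + M) = ∑' k, if M ≤ h k then 2⁻¹ ^ h k else 0 := by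
  rw [tsum_comp_eq_tsum_uf_mul hfin fun j => if M ≤ j then (2⁻¹ : ℝ≥0∞) ^ j else 0]
  symm
  rw [← ENNReal.summable.sum_add_tsum_nat_add' (k := M),
    Finset.sum_eq_zero fun j hj => by simp [Finset.mem_range.1 hj], zero_add]
  simp only [Nat.le_add_left, if_true]

theorem tsum_uf_mul_nat_add_le (hfin : ∀ j, {k | h k = j}.Finite) (M m : ℕ) :
    ∑' j, (uf h (j + M) : ℝ≥0∞) * 2⁻¹ ^ (j + M) ≤ m * 2⁻¹ ^ M + ∑' k, 2⁻¹ ^ h (k + m) := by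
  rw [tsum_uf_mul_nat_add_eq hfin, ← ENNReal.summable.sum_add_tsum_nat_add' (k := m)]
  gcongr
  · refine (Finset.sum_le_card_nsmul _ _ (2⁻¹ ^ M) fun k _ => ?_).trans_eq (by simp)
    split_ifs with hk
    · exact pow_le_pow_right_of_le_one' (by norm_num) hk
    · exact zero_le
  · split_ifs <;> simp

theorem tsum_two_inv_pow_nat_add_le (hmono : Monotone h) (hfin : ∀ j, {k | h k = j}.Finite)
    (m : ℕ) :
    ∑' k, (2⁻¹ : ℝ≥0∞) ^ h (k + m) ≤ ∑' j, (uf h (j + h m) : ℝ≥0∞) * 2⁻¹ ^ (j + h m) := by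
  rw [tsum_uf_mul_nat_add_eq hfin]
  calc ∑' k, (2⁻¹ : ℝ≥0∞) ^ h (k + m)
      = ∑' k, if h m ≤ h (k + m) then (2⁻¹ : ℝ≥0∞) ^ h (k + m) else 0 :=
        tsum_congr fun k => (if_pos (hmono (Nat.le_add_left m k))).symm
    _ ≤ _ := ENNReal.tsum_comp_le_tsum_of_injective (add_left_injective m)
        fun k => if h m ≤ h k then (2⁻¹ : ℝ≥0∞) ^ h k else 0

theorem Monotone.le_apply_mul_two_pow (hmono : Monotone h) {K : ℕ}
    (hK : ∑' k, (2⁻¹ : ℝ≥0∞) ^ h k < K) (M : ℕ) : M ≤ h (K * 2 ^ M) := by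
  by_contra! hlt
  refine hK.not_ge ?_
  calc (K : ℝ≥0∞) = (Finset.range (K * 2 ^ M)).card • (2⁻¹ : ℝ≥0∞) ^ M := by
        rw [Finset.card_range, nsmul_eq_mul]
        push_cast
        rw [mul_assoc, ← mul_pow, ENNReal.mul_inv_cancel two_ne_zero ofNat_ne_top, one_pow,
          mul_one]
    _ ≤ ∑ k ∈ Finset.range (K * 2 ^ M), (2⁻¹ : ℝ≥0∞) ^ h k :=
        Finset.card_nsmul_le_sum _ _ _ fun k hk => pow_le_pow_right_of_le_one' (by norm_num)
          ((hmono (Finset.mem_range.1 hk).le).trans_lt hlt).le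
    _ ≤ ∑' k, (2⁻¹ : ℝ≥0∞) ^ h k := ENNReal.sum_le_tsum _

theorem ConvergesComputably.uf_mul_two_zpow (hfin : ∀ j, {k | h k = j}.Finite)
    (hcc : ConvergesComputably fun k => (2 : ℝ) ^ (-(h k : ℤ))) :
    ConvergesComputably fun j => (uf h j : ℝ) * 2 ^ (-(j : ℤ)) := by
  rw [convergesComputably_iff_tsum_ofReal_le fun k => by positivity] at hcc ⊢
  obtain ⟨s, hs, hsmall⟩ := hcc
  simp only [ofReal_two_zpow_neg] at hsmall
  have hsucc : Computable (· + 1) := Primrec.succ.to_comp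
  refine ⟨fun n => n + 1 + s (n + 1), Primrec.nat_add.to_comp.comp hsucc (hs.comp hsucc),
    fun n => ?_⟩
  simp only [ENNReal.ofReal_mul (Nat.cast_nonneg _), ofReal_natCast, ofReal_two_zpow_neg]
  calc _ ≤ (s (n + 1) : ℝ≥0∞) * 2⁻¹ ^ (n + 1 + s (n + 1)) + ∑' k, 2⁻¹ ^ h (k + s (n + 1)) :=
        tsum_uf_mul_nat_add_le hfin _ _
    _ ≤ (2⁻¹ : ℝ≥0∞) ^ (n + 1) + 2⁻¹ ^ (n + 1) :=
        add_le_add (natCast_mul_two_inv_pow_add_le _ _) (hsmall _)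
    _ = 2⁻¹ ^ n := by rw [pow_succ, ← mul_add, ENNReal.inv_two_add_inv_two, mul_one]

theorem ConvergesComputably.two_zpow_of_uf_mul (hmono : Monotone h)
    (hfin : ∀ j, {k | h k = j}.Finite)
    (hcc : ConvergesComputably fun j => (uf h j : ℝ) * 2 ^ (-(j : ℤ))) :
    ConvergesComputably fun k => (2 : ℝ) ^ (-(h k : ℤ)) := by
  rw [convergesComputably_iff_tsum_ofReal_le fun k => by positivity] at hcc ⊢
  obtain ⟨t, ht, hsmall⟩ := hcc
  simp only [ENNReal.ofReal_mul (Nat.cast_nonneg _), ofReal_natCast, ofReal_two_zpow_neg]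
    at hsmall ⊢
  have htotal : ∑' k, (2⁻¹ : ℝ≥0∞) ^ h k ≠ ⊤ := by
    rw [tsum_comp_eq_tsum_uf_mul hfin (2⁻¹ ^ ·),
      ← ENNReal.summable.sum_add_tsum_nat_add' (k := t 0)]
    exact add_ne_top.2 ⟨sum_ne_top.2 fun j _ => mul_ne_top (natCast_ne_top _)
      (pow_ne_top (by norm_num)), ((hsmall 0).trans_lt (pow_lt_top (by norm_num))).ne⟩
  obtain ⟨K, hK⟩ := ENNReal.exists_nat_gt htotal
  have hpow : Primrec fun M : ℕ => K * 2 ^ M :=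
    Primrec.nat_mul.comp (Primrec.const K) ((Primrec₂.unpaired'.1 Nat.Primrec.pow).comp
      (Primrec.const 2) Primrec.id)
  refine ⟨fun n => K * 2 ^ t n, hpow.to_comp.comp ht, fun n => ?_⟩
  calc _ ≤ ∑' j, (uf h (j + h (K * 2 ^ t n)) : ℝ≥0∞) * 2⁻¹ ^ (j + h (K * 2 ^ t n)) :=
        tsum_two_inv_pow_nat_add_le hmono hfin _
    _ ≤ ∑' j, (uf h (j + t n) : ℝ≥0∞) * 2⁻¹ ^ (j + t n) :=
        ENNReal.antitone_tsum_nat_add (fun j => (uf h j : ℝ≥0∞) * 2⁻¹ ^ j)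
          (hmono.le_apply_mul_two_pow hK (t n))
    _ ≤ 2⁻¹ ^ n := hsmall n

end Fibers

theorem TendsToInfinity.finite_fiber {f : ℕ → ℕ} (hf : TendsToInfinity f) (j : ℕ) :
    {k | f k = j}.Finite := by
  obtain ⟨m, hm⟩ := hf j
  exact (Set.finite_Iio m).subset fun k hk => not_le.1 fun hkm => (hm k hkm).ne' hk

theorem Monotone.tendsToInfinity {g : ℕ → ℕ} (hg : Monotone g) (hunb : ∀ c, ∃ n, c < g n) :
    TendsToInfinity g := fun c =>
  (hunb c).imp fun _ hn _ hk => hn.trans_le (hg hk)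

theorem TendsToInfinity.exists_lt_of_uf_eq {f g : ℕ → ℕ} (hf : TendsToInfinity f)
    (hu : uf g = uf f) (c : ℕ) : ∃ n, c < g n := by
  obtain ⟨m, hm⟩ := hf c
  have : Finite {k | f k = f m} := (hf.finite_fiber (f m)).to_subtype
  have hne : uf g (f m) ≠ 0 := by
    rw [hu, uf, Nat.card_ne_zero]
    exact ⟨⟨⟨m, rfl⟩⟩, inferInstance⟩
  obtain ⟨⟨n, hn⟩⟩ := (Nat.card_ne_zero.1 hne).1
  exact ⟨n, (hn : g n = f m) ▸ hm m le_rfl⟩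

lemma uf_comp_equiv (f : ℕ → ℕ) (σ : ℕ ≃ ℕ) : uf (f ∘ σ) = uf f :=
  funext fun _ => Nat.card_congr (σ.subtypeEquiv fun _ => Iff.rfl)

theorem exists_equiv_comp_eq_of_card_fiber_eq {α β γ : Type*} {f : α → γ} {g : β → γ}
    (hf : ∀ c, {a | f a = c}.Finite) (hg : ∀ c, {b | g b = c}.Finite)
    (hcard : ∀ c, Nat.card {b | g b = c} = Nat.card {a | f a = c}) :
    ∃ σ : β ≃ α, ∀ b, f (σ b) = g b := by
  have e : ∀ c, {b // g b = c} ≃ {a // f a = c} := fun c =>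
    have := (hf c).to_subtype
    have := (hg c).to_subtype
    (Finite.card_eq.1 (hcard c)).some
  exact ⟨(Equiv.sigmaFiberEquiv g).symm.trans
    ((Equiv.sigmaCongrRight e).trans (Equiv.sigmaFiberEquiv f)), fun b => (e (g b) ⟨b, rfl⟩).2⟩

theorem stmt1_general (f : ℕ → ℕ) (hf : TendsToInfinity f)
    (fstar : ℕ → ℕ) (hmono : Monotone fstar)
    (hu : uf fstar = uf f) :
    ((∃ σ : ℕ → ℕ, Function.Bijective σ ∧
        ConvergesComputably (fun k => (2:ℝ)^(-(f (σ k) : ℤ)))) ↔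
      ConvergesComputably (fun k => (2:ℝ)^(-(fstar k : ℤ)))) ∧
    (ConvergesComputably (fun k => (2:ℝ)^(-(fstar k : ℤ))) ↔
      ConvergesComputably (fun k => (uf f k : ℝ) * (2:ℝ)^(-(k:ℤ)))) := by
  have hstar : TendsToInfinity fstar := hmono.tendsToInfinity (hf.exists_lt_of_uf_eq hu)
  have grouped : ConvergesComputably (fun k => (2:ℝ)^(-(fstar k : ℤ))) ↔
      ConvergesComputably (fun k => (uf f k : ℝ) * (2:ℝ)^(-(k:ℤ))) := by
    rw [← hu]
    exact ⟨.uf_mul_two_zpow hstar.finite_fiber, .two_zpow_of_uf_mul hmono hstar.finite_fiber⟩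
  refine ⟨⟨fun ⟨σ, hσ, hcc⟩ => ?_, fun hcc => ?_⟩, grouped⟩
  · rw [grouped, ← uf_comp_equiv f (.ofBijective σ hσ)]
    exact hcc.uf_mul_two_zpow fun j => (hf.finite_fiber j).preimage hσ.injective.injOn
  · obtain ⟨σ, hσ⟩ := exists_equiv_comp_eq_of_card_fiber_eq hf.finite_fiber hstar.finite_fiber
      (congrFun hu)
    exact ⟨σ, σ.bijective, by simpa only [hσ] using hcc⟩

/-- equivalence of computable convergence of some rearrangement, of the
non-decreasing rearrangement, and of the grouped series. -/
theorem stmt1 (f : ℕ → ℕ) (hf : TendsToInfinity f)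
    (fstar : ℕ → ℕ) (hmono : Monotone fstar) (hunb : ∀ c : ℕ, ∃ n : ℕ, c < fstar n)
    (hu : uf fstar = uf f) :
    ((∃ σ : ℕ → ℕ, Function.Bijective σ ∧
        ConvergesComputably (fun k => (2:ℝ)^(-(f (σ k) : ℤ)))) ↔
      ConvergesComputably (fun k => (2:ℝ)^(-(fstar k : ℤ)))) ∧
    (ConvergesComputably (fun k => (2:ℝ)^(-(fstar k : ℤ))) ↔
      ConvergesComputably (fun k => (uf f k : ℝ) * (2:ℝ)^(-(k:ℤ)))) :=
  stmt1_general f hf fstar hmono hu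
end

section
/- Every regular real number is reordered computable. -/
open Filter

/-!
Write `x = ∑_{a<N} x_{A_a}` with `A_a` the range of a computable `G a`. A name for `x` has to
emit one dyadic term per stage, and stage `⟪a, b⟫` emits `2^{-(G a b + 1)}` when `a < N` and
`G a b` is new in row `a` (the stage is fresh), so each element of each `A_a` is counted once.
All other stages, and stage `0` itself, are idle: the term `2^{-(G 0 0 + 1)}` owed by stage `0`
is held in reserve as `∑_r 2^{-(G 0 0 + 2 + r)}`, and the `r`-th idle stage emits the `r`-th
piece. An exponent is then produced by at most one fresh stage per row and one idle stage, so
`u_f ≤ N + 1 ≤ 2^N`, which gives the computable modulus.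
-/

open scoped ENNReal

theorem Computable.nat_count {α : Type*} [Primcodable α] {p : α → ℕ → Bool}
    (hp : Computable₂ p) : Computable₂ fun a n => Nat.count (fun k => p a k) n := by
  have h : Computable fun q : α × ℕ =>
      Nat.rec (motive := fun _ => ℕ) 0 (fun k c => c + bif p q.1 k then 1 else 0) q.2 :=
    Computable.nat_rec Computable.snd (Computable.const 0)
      (Primrec.nat_add.to_comp.comp₂ (Computable.snd.comp Computable.snd).to₂
        (Computable.cond (hp.comp (Computable.fst.comp Computable.fst)
          (Computable.fst.comp Computable.snd)) (Computable.const 1) (Computable.const 0)).to₂)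
  refine h.of_eq fun ⟨a, n⟩ => ?_
  induction n with
  | zero => simp
  | succ n ih => cases hpn : p a n <;> simp_all [Nat.count_succ]

theorem tsum_subtype_count {M : Type*} [AddCommMonoid M] [TopologicalSpace M]
    {p : ℕ → Prop} [DecidablePred p] (hp : (Set.ofPred p).Infinite) (F : ℕ → M) :
    ∑' t : {t // p t}, F (Nat.count p t) = ∑' r, F r := by
  have hbij : Function.Bijective fun t : {t // p t} => Nat.count p t :=
    ⟨fun t t' h => Subtype.ext (Nat.count_injective t.2 t'.2 h),
      fun r => ⟨⟨_, Nat.nth_mem_of_infinite hp r⟩, Nat.count_nth_of_infinite hp r⟩⟩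
  exact (Equiv.ofBijective _ hbij).tsum_eq F

theorem tsum_ite_eq_tsum_subtype {β M : Type*} [AddCommMonoid M] [TopologicalSpace M]
    (p : β → Prop) [DecidablePred p] (f : β → M) :
    ∑' b, (if p b then f b else 0) = ∑' b : {b // p b}, f b :=
  ((tsum_subtype (Set.ofPred p) f).trans
    (tsum_congr fun b => by by_cases h : p b <;> simp [h])).symm

theorem eq_of_firstOccurrence {β : Type*} {g : ℕ → β} {b b' : ℕ}
    (hb : ∀ c < b, g c ≠ g b)
    (hb' : ∀ c < b', g c ≠ g b') (h : g b = g b') : b = b' := by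
  rcases lt_trichotomy b b' with hlt | heq | hlt
  · exact absurd h (hb' b hlt)
  · exact heq
  · exact absurd h.symm (hb b' hlt)

theorem tsum_firstOccurrence {β M : Type*} [AddCommMonoid M] [TopologicalSpace M]
    (g : ℕ → β) (F : β → M) :
    ∑' b : {b // ∀ c < b, g c ≠ g b}, F (g b) = ∑' y : Set.range g, F y := by
  classical
  have hbij : Function.Bijective fun b : {b // ∀ c < b, g c ≠ g b} =>
      (⟨g b, b, rfl⟩ : Set.range g) :=
    ⟨fun b b' h => Subtype.ext (eq_of_firstOccurrence b.2 b'.2 (congrArg Subtype.val h)),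
      fun ⟨y, hy⟩ => ⟨⟨Nat.find hy, fun c hc h =>
        Nat.find_min hy hc (h.trans (Nat.find_spec hy))⟩, Subtype.ext (Nat.find_spec hy)⟩⟩
  exact (Equiv.ofBijective _ hbij).tsum_eq fun y => F y

theorem ENNReal.tsum_two_inv_pow_add (c : ℕ) :
    ∑' r, (2⁻¹ : ℝ≥0∞) ^ (c + 1 + r) = 2⁻¹ ^ c := by
  simp_rw [pow_add, ENNReal.tsum_mul_left, ENNReal.tsum_geometric, ENNReal.one_sub_inv_two,
    inv_inv, pow_one, mul_assoc, ENNReal.inv_mul_cancel two_ne_zero ENNReal.ofNat_ne_top, mul_one]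

theorem ENNReal.toReal_two_inv_pow (m : ℕ) :
    ((2⁻¹ : ℝ≥0∞) ^ m).toReal = (2 : ℝ) ^ (-(m : ℤ)) := by
  simp [zpow_neg, zpow_natCast]

theorem convergesComputably_of_le_two_pow {a : ℕ → ℝ} (c : ℕ) (ha₀ : ∀ k, 0 ≤ a k)
    (ha : ∀ k, a k ≤ 2 ^ c * 2⁻¹ ^ k) : ConvergesComputably a := by
  have hgeom : Summable fun k => (2 : ℝ) ^ c * 2⁻¹ ^ k :=
    (summable_geometric_of_lt_one (by norm_num) (by norm_num)).mul_left _
  have hsum : Summable a := .of_nonneg_of_le ha₀ ha hgeom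
  refine ⟨∑' k, a k, fun n => n + c + 1, (Primrec.nat_add.comp Primrec.id
    (Primrec.const (c + 1))).to_comp, fun n m hm => ?_⟩
  rw [← hsum.sum_add_tsum_nat_add m, add_sub_cancel_left,
    abs_of_nonneg (tsum_nonneg fun i => ha₀ _)]
  calc ∑' i, a (i + m) ≤ ∑' i, (2 : ℝ) ^ c * 2⁻¹ ^ (i + m) :=
        ((summable_nat_add_iff m).2 hsum).tsum_le_tsum (fun i => ha _)
          ((summable_nat_add_iff m).2 hgeom)
    _ = 2 ^ (c + 1) * 2⁻¹ ^ m := by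
        simp_rw [pow_add, ← mul_assoc, mul_right_comm _ _ ((2 : ℝ)⁻¹ ^ m), tsum_mul_left,
          tsum_geometric_inv_two]
        ring
    _ ≤ 2 ^ (c + 1) * 2⁻¹ ^ (n + c + 1) :=
        mul_le_mul_of_nonneg_left (pow_le_pow_of_le_one (by norm_num) (by norm_num) hm)
          (by positivity)
    _ = (2 : ℝ) ^ (-(n : ℤ)) := by
        rw [zpow_neg, zpow_natCast, ← inv_pow, add_assoc, pow_add (2⁻¹ : ℝ) n, mul_left_comm,
          ← mul_pow, mul_inv_cancel₀ two_ne_zero, one_pow, mul_one]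

theorem xA_eq_toReal_tsum (A : Set ℕ) :
    xA A = (∑' n : A, (2⁻¹ : ℝ≥0∞) ^ ((n : ℕ) + 1)).toReal := by
  rw [ENNReal.tsum_toReal_eq fun _ => by simp, xA]
  refine tsum_congr fun n => ?_
  rw [ENNReal.toReal_two_inv_pow]
  push_cast
  ring_nf

theorem tsum_subtype_two_inv_pow_succ_ne_top (A : Set ℕ) :
    ∑' n : A, (2⁻¹ : ℝ≥0∞) ^ ((n : ℕ) + 1) ≠ ⊤ := by
  have h : ∑' n, (2⁻¹ : ℝ≥0∞) ^ (n + 1) = 1 := by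
    simpa [add_comm] using ENNReal.tsum_two_inv_pow_add 0
  exact ne_top_of_le_ne_top (h ▸ ENNReal.one_ne_top)
    (ENNReal.tsum_comp_le_tsum_of_injective Subtype.val_injective _)

section Construction

variable (N : ℕ) (G : ℕ → ℕ → ℕ)

def IsFreshStage (t : ℕ) : Prop :=
  t.unpair.1 < N ∧ ∀ b < t.unpair.2, G t.unpair.1 b ≠ G t.unpair.1 t.unpair.2

instance : DecidablePred (IsFreshStage N G) := fun _ => inferInstanceAs (Decidable (_ ∧ _))

def IsIdleStage (t : ℕ) : Prop := t = 0 ∨ ¬ IsFreshStage N G t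

instance : DecidablePred (IsIdleStage N G) := fun _ => inferInstanceAs (Decidable (_ ∨ _))

def reorderedName (t : ℕ) : ℕ :=
  if IsIdleStage N G t then G 0 0 + 2 + Nat.count (IsIdleStage N G) t
  else G t.unpair.1 t.unpair.2 + 1

variable {N G}

theorem computable_decide_isFreshStage (hG : Computable₂ G) :
    Computable fun t => decide (IsFreshStage N G t) := by
  have hrow : Computable fun t : ℕ => t.unpair.1 := Computable.fst.comp Computable.unpair
  have hcol : Computable fun t : ℕ => t.unpair.2 := Computable.snd.comp Computable.unpair
  have hrepeats : Computable₂ fun (t b : ℕ) => G t.unpair.1 b == G t.unpair.1 t.unpair.2 :=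
    Primrec.beq.to_comp.comp₂ (hG.comp (hrow.comp Computable.fst) Computable.snd).to₂
      ((hG.comp hrow hcol).comp Computable.fst).to₂
  refine ((Primrec.and.to_comp.comp (Primrec.nat_lt.decide.to_comp.comp hrow
    (Computable.const N)) (Primrec.eq.decide.to_comp.comp
    ((Computable.nat_count hrepeats).comp Computable.id hcol) (Computable.const 0)))).of_eq
    fun t => ?_
  simp [IsFreshStage, ← Nat.count_iff_forall_not]

theorem computable_reorderedName (hG : Computable₂ G) : Computable (reorderedName N G) := by
  have hidle : Computable fun t => decide (IsIdleStage N G t) :=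
    (Primrec.or.to_comp.comp (Primrec.beq.to_comp.comp Computable.id (Computable.const 0))
      (Primrec.not.to_comp.comp (computable_decide_isFreshStage (N := N) hG))).of_eq
      fun t => by by_cases h : t = 0 <;> simp [IsIdleStage, h]
  have hcount : Computable (Nat.count (IsIdleStage N G)) :=
    ((Computable.nat_count (hidle.comp Computable.snd).to₂).comp Computable.id
      Computable.id).of_eq fun t => by simp
  refine (Computable.cond hidle
    (Primrec.nat_add.to_comp.comp (Computable.const (G 0 0 + 2)) hcount)
    (Primrec.succ.to_comp.comp (hG.comp (Computable.fst.comp Computable.unpair)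
      (Computable.snd.comp Computable.unpair)))).of_eq fun t => ?_
  by_cases h : IsIdleStage N G t <;> simp [reorderedName, h]

theorem IsFreshStage.eq_of_value_eq {t t' : ℕ} (h : IsFreshStage N G t)
    (h' : IsFreshStage N G t') (hrow : t.unpair.1 = t'.unpair.1)
    (hval : G t.unpair.1 t.unpair.2 = G t'.unpair.1 t'.unpair.2) : t = t' := by
  have h₂ : ∀ b < t.unpair.2, G t'.unpair.1 b ≠ G t'.unpair.1 t.unpair.2 := hrow ▸ h.2
  rw [← Nat.pair_unpair t, ← Nat.pair_unpair t', hrow,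
    eq_of_firstOccurrence h₂ h'.2 (hrow ▸ hval)]

theorem IsFreshStage.of_not_isIdleStage {t : ℕ} (h : ¬ IsIdleStage N G t) :
    IsFreshStage N G t :=
  not_not.1 (not_or.1 h).2

theorem uf_reorderedName_le (n : ℕ) : uf (reorderedName N G) n ≤ N + 1 := by
  let label : ℕ → ℕ := fun t => if IsIdleStage N G t then N else t.unpair.1
  have hmaps : ∀ t ∈ {t | reorderedName N G t = n}, label t ∈ Set.Iic N := by
    intro t _
    by_cases hi : IsIdleStage N G t
    · simp [label, hi]
    · simpa [label, hi] using (IsFreshStage.of_not_isIdleStage hi).1.le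
  have hinj : Set.InjOn label {t | reorderedName N G t = n} := by
    intro t ht t' ht' hl
    simp only [Set.mem_ofPred_eq, reorderedName] at ht ht'
    by_cases hi : IsIdleStage N G t <;> by_cases hi' : IsIdleStage N G t' <;>
      simp only [label, hi, hi', if_true, if_false] at ht ht' hl
    · exact Nat.count_injective hi hi' (by omega)
    · exact absurd (IsFreshStage.of_not_isIdleStage hi').1 (by omega)
    · exact absurd (IsFreshStage.of_not_isIdleStage hi).1 (by omega)
    · exact (IsFreshStage.of_not_isIdleStage hi).eq_of_value_eq
        (IsFreshStage.of_not_isIdleStage hi') hl (by omega)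
  calc uf (reorderedName N G) n = Set.ncard {t | reorderedName N G t = n} :=
        Nat.card_coe_set_eq _
    _ ≤ (Set.Iic N).ncard := Set.ncard_le_ncard_of_injOn label hmaps hinj (Set.finite_Iic N)
    _ = N + 1 := by simp

theorem infinite_isIdleStage : (Set.ofPred (IsIdleStage N G)).Infinite :=
  Set.infinite_of_injective_forall_mem (f := Nat.pair N)
    (fun b b' h => (Nat.pair_eq_pair.1 h).2)
    fun b => Or.inr fun h => (lt_irrefl N) (by simpa using h.1)

theorem tsum_ite_isIdleStage :
    ∑' t, (if IsIdleStage N G t then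
      (2⁻¹ : ℝ≥0∞) ^ (G 0 0 + 2 + Nat.count (IsIdleStage N G) t) else 0) = 2⁻¹ ^ (G 0 0 + 1) := by
  calc _ = ∑' t : {t // IsIdleStage N G t},
          (2⁻¹ : ℝ≥0∞) ^ (G 0 0 + 2 + Nat.count (IsIdleStage N G) t) :=
        tsum_ite_eq_tsum_subtype _ _
    _ = ∑' r, (2⁻¹ : ℝ≥0∞) ^ (G 0 0 + 1 + 1 + r) :=
        tsum_subtype_count infinite_isIdleStage fun r => (2⁻¹ : ℝ≥0∞) ^ (G 0 0 + 2 + r)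
    _ = 2⁻¹ ^ (G 0 0 + 1) := ENNReal.tsum_two_inv_pow_add _

theorem tsum_ite_isFreshStage :
    ∑' t, (if IsFreshStage N G t then (2⁻¹ : ℝ≥0∞) ^ (G t.unpair.1 t.unpair.2 + 1)
      else 0) =
      ∑ a ∈ Finset.range N, ∑' y : Set.range (G a), 2⁻¹ ^ ((y : ℕ) + 1) := by
  calc _ = ∑' a, ∑' b,
          (if IsFreshStage N G (Nat.pair a b) then (2⁻¹ : ℝ≥0∞) ^ (G a b + 1) else 0) := by
        rw [← Nat.pairEquiv.tsum_eq, ENNReal.tsum_prod']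
        refine tsum_congr fun a => tsum_congr fun b => ?_
        rw [show Nat.pairEquiv (a, b) = Nat.pair a b from rfl, Nat.unpair_pair]
    _ = ∑ a ∈ Finset.range N, ∑' b,
          (if ∀ c < b, G a c ≠ G a b then (2⁻¹ : ℝ≥0∞) ^ (G a b + 1) else 0) := by
        rw [tsum_eq_sum (s := Finset.range N)]
        · refine Finset.sum_congr rfl fun a ha => tsum_congr fun b => ?_
          simp [IsFreshStage, Finset.mem_range.1 ha]
        · intro a ha
          simp [IsFreshStage, Finset.mem_range.not.1 ha]
    _ = _ := by
        refine Finset.sum_congr rfl fun a _ => ?_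
        rw [← tsum_firstOccurrence (G a) fun y => (2⁻¹ : ℝ≥0∞) ^ (y + 1)]
        exact tsum_ite_eq_tsum_subtype _ _

theorem tsum_two_inv_pow_reorderedName (hN : 0 < N) :
    ∑' t, (2⁻¹ : ℝ≥0∞) ^ reorderedName N G t =
      ∑ a ∈ Finset.range N, ∑' y : Set.range (G a), 2⁻¹ ^ ((y : ℕ) + 1) := by
  have hfresh₀ : IsFreshStage N G 0 := ⟨by simpa using hN, by simp⟩
  have hsplit : ∀ t, (2⁻¹ : ℝ≥0∞) ^ reorderedName N G t =
      (if IsIdleStage N G t then 2⁻¹ ^ (G 0 0 + 2 + Nat.count (IsIdleStage N G) t) else 0) +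
      (if t = 0 then 0 else
        if IsFreshStage N G t then 2⁻¹ ^ (G t.unpair.1 t.unpair.2 + 1) else 0) := by
    intro t
    by_cases h₀ : t = 0 <;> by_cases hf : IsFreshStage N G t <;>
      simp [reorderedName, IsIdleStage, h₀, hf]
  rw [tsum_congr hsplit, ENNReal.tsum_add, tsum_ite_isIdleStage, ← tsum_ite_isFreshStage]
  conv_rhs => rw [ENNReal.summable.tsum_eq_add_tsum_ite' 0]
  simp [hfresh₀]

theorem isName_reorderedName (hN : 0 < N) :
    IsName (reorderedName N G) (∑ a ∈ Finset.range N, xA (Set.range (G a))) := by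
  have hfin : ∀ a ∈ Finset.range N,
      ∑' y : Set.range (G a), (2⁻¹ : ℝ≥0∞) ^ ((y : ℕ) + 1) ≠ ⊤ :=
    fun a _ => tsum_subtype_two_inv_pow_succ_ne_top _
  have h := ENNReal.hasSum_toReal (f := fun t => (2⁻¹ : ℝ≥0∞) ^ reorderedName N G t)
    (by rw [tsum_two_inv_pow_reorderedName hN]; exact ENNReal.sum_ne_top.2 hfin)
  rw [← ENNReal.tsum_toReal_eq fun _ => by simp, tsum_two_inv_pow_reorderedName hN,
    ENNReal.toReal_sum hfin] at h
  simpa only [IsName, ENNReal.toReal_two_inv_pow, ← xA_eq_toReal_tsum] using h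

theorem convergesComputably_uf_reorderedName :
    ConvergesComputably fun k => (uf (reorderedName N G) k : ℝ) * 2 ^ (-(k : ℤ)) := by
  refine convergesComputably_of_le_two_pow N (fun k => by positivity) fun k => ?_
  rw [zpow_neg, zpow_natCast, ← inv_pow]
  gcongr
  exact_mod_cast (uf_reorderedName_le k).trans (Nat.lt_two_pow_self (n := N))

theorem reorderedComputable_sum_xA (hN : 0 < N) (hG : Computable₂ G) :
    ReorderedComputable (∑ a ∈ Finset.range N, xA (Set.range (G a))) :=
  ⟨reorderedName N G, computable_reorderedName hG, isName_reorderedName hN,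
    convergesComputably_uf_reorderedName⟩

end Construction

theorem Regular.exists_eq_sum_xA {x : ℝ} (h : Regular x) :
    ∃ (N : ℕ) (G : ℕ → ℕ → ℕ), Computable₂ G ∧
      x = ∑ a ∈ Finset.range N, xA (Set.range (G a)) := by
  obtain ⟨n, s, hs, rfl⟩ := h
  induction n with
  | zero => exact ⟨0, fun _ _ => 0, Computable.const 0, by simp⟩
  | succ n ih =>
    obtain ⟨N, G, hG, hsum⟩ := ih (fun i => s i.succ) fun i => hs i.succ
    obtain ⟨A, hA | ⟨g, hg, rfl⟩, hx⟩ := hs 0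
    · refine ⟨N, G, hG, ?_⟩
      rw [Fin.sum_univ_succ, ← hx, hA, hsum, xA, tsum_empty, zero_add]
    · refine ⟨N + 1, fun a b => Nat.casesOn (motive := fun _ => ℕ) a (g b) fun a => G a b,
        Computable.nat_casesOn Computable.fst (hg.comp Computable.snd)
          (hG.comp Computable.snd (Computable.snd.comp Computable.fst)), ?_⟩
      rw [Fin.sum_univ_succ, Finset.sum_range_succ', ← hx, hsum, add_comm]
      rfl

/-- every (positive) regular real number is reordered computable. -/
theorem stmt3 (x : ℝ) (hx : 0 < x) (h : Regular x) : ReorderedComputable x := by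
  obtain ⟨N, G, hG, rfl⟩ := h.exists_eq_sum_xA
  have hN : 0 < N := Nat.pos_of_ne_zero fun hN => by simp [hN] at hx
  exact reorderedComputable_sum_xA hN hG
end

section
/- Let f : ℕ → ℕ be a function (not necessarily computable) with limsup_{n→∞} (f(n))^{1/n} < 2. Then the series ∑_{k=0}^∞ f(k)·2^{−k} converges computably. -/
open Filter

/-!
Pick `r` strictly between `limsup f(n)^{1/n}` and `2`. Then eventually `f n ≤ r ^ n`, so the
terms are `O((r/2)^n)` and the tail after `m` terms is at most `C (r/2)^m`. Such a geometric bound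
drops below `2^{-n}` once `m ≥ K + c n` for suitable constants `K`, `c`; this modulus is linear,
hence computable, although `f` itself need not be.
-/

open Asymptotics Finset
open scoped NNReal ENNReal

theorem eventually_le_pow_of_rootLimsup_lt {a : ℕ → ℕ} {r : ℝ≥0} (h : rootLimsup a < r) :
    ∀ᶠ n in atTop, (a n : ℝ) ≤ (r : ℝ) ^ n := by
  filter_upwards [eventually_lt_of_limsup_lt h, eventually_gt_atTop 0] with n hlt hn
  have hle : (a n : ℝ≥0∞) ≤ (r : ℝ≥0∞) ^ (n : ℝ) := by
    rw [one_div] at hlt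
    exact (ENNReal.rpow_inv_le_iff (by positivity)).mp hlt.le
  rw [ENNReal.rpow_natCast, ← ENNReal.coe_pow] at hle
  exact_mod_cast hle

theorem exists_computable_modulus_of_geometric {C ρ : ℝ} (hρ0 : 0 ≤ ρ) (hρ1 : ρ < 1) :
    ∃ s : ℕ → ℕ, Computable s ∧ ∀ n, ∀ m ≥ s n, C * ρ ^ m ≤ (2 : ℝ) ^ (-(n : ℤ)) := by
  set D := max C 1
  have hD : 0 < D := lt_max_of_lt_right one_pos
  obtain ⟨K, hK⟩ := exists_pow_lt_of_lt_one (one_div_pos.mpr hD) hρ1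
  obtain ⟨c, hc⟩ := exists_pow_lt_of_lt_one (one_half_pos (α := ℝ)) hρ1
  refine ⟨fun n => K + c * n, (Primrec.nat_add.comp (Primrec.const K)
    (Primrec.nat_mul.comp (Primrec.const c) Primrec.id)).to_comp, fun n m hm => ?_⟩
  calc C * ρ ^ m ≤ D * ρ ^ (K + c * n) :=
        mul_le_mul (le_max_left _ _) (pow_le_pow_of_le_one hρ0 hρ1.le hm) (by positivity) hD.le
    _ = (D * ρ ^ K) * (ρ ^ c) ^ n := by rw [pow_add, pow_mul, mul_assoc]
    _ ≤ 1 * (1 / 2) ^ n := by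
        gcongr
        exact ((lt_div_iff₀' hD).mp hK).le
    _ = (2 : ℝ) ^ (-(n : ℤ)) := by simp [zpow_neg]

theorem convergesComputably_of_le_geometric {a : ℕ → ℝ} {C ρ : ℝ} (hρ0 : 0 ≤ ρ) (hρ1 : ρ < 1)
    (ha : ∀ n, |a n| ≤ C * ρ ^ n) : ConvergesComputably a := by
  have hsum : Summable a :=
    .of_norm_bounded ((summable_geometric_of_lt_one hρ0 hρ1).mul_left C) ha
  obtain ⟨s, hs, hmod⟩ := exists_computable_modulus_of_geometric (C := C / (1 - ρ)) hρ0 hρ1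
  refine ⟨∑' k, a k, s, hs, fun n m hm => ?_⟩
  calc |∑' k, a k - ∑ k ∈ range m, a k|
      = ‖∑ k ∈ range m, a k - ∑' k, a k‖ := by rw [Real.norm_eq_abs, abs_sub_comm]
    _ ≤ C * ρ ^ m / (1 - ρ) := norm_sub_le_of_geometric_bound_of_hasSum hρ1 ha hsum.hasSum m
    _ = C / (1 - ρ) * ρ ^ m := by ring
    _ ≤ (2 : ℝ) ^ (-(n : ℤ)) := hmod n m hm

theorem convergesComputably_of_isBigO_geometric {a : ℕ → ℝ} {ρ : ℝ} (hρ0 : 0 < ρ) (hρ1 : ρ < 1)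
    (ha : a =O[atTop] (ρ ^ ·)) : ConvergesComputably a := by
  obtain ⟨C, hC⟩ := (isBigO_nat_atTop_iff fun n hn => absurd hn (pow_ne_zero n hρ0.ne')).mp ha
  refine convergesComputably_of_le_geometric (C := C) hρ0.le hρ1 fun n => ?_
  simpa [abs_of_pos hρ0] using hC n

/-- if `limsup (f n)^{1/n} < 2` then `∑ f(k)·2^{-k}` converges computably. -/
theorem stmt4 (f : ℕ → ℕ) (h : rootLimsup f < 2) :
    ConvergesComputably (fun k => (f k : ℝ) * (2:ℝ)^(-(k:ℤ))) := by
  obtain ⟨r, hfr, hr2⟩ := ENNReal.lt_iff_exists_nnreal_btwn.mp h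
  have hr0 : (0 : ℝ) < r := by exact_mod_cast pos_of_gt hfr
  replace hr2 : (r : ℝ) < 2 := by exact_mod_cast hr2
  refine convergesComputably_of_isBigO_geometric (ρ := r / 2) (by positivity) (by linarith) ?_
  refine IsBigO.of_bound 1 ?_
  filter_upwards [eventually_le_pow_of_rootLimsup_lt hfr] with k hk
  rw [one_mul, norm_mul, norm_pow, Real.norm_natCast, norm_zpow, Real.norm_ofNat, zpow_neg,
    zpow_natCast, Real.norm_of_nonneg (by positivity), div_pow, div_eq_mul_inv]
  gcongr
end

section
/- Let f : ℕ → ℕ be a function such that the series ∑_{k=0}^∞ f(k)·2^{−k} converges, let c ∈ ℕ, and define g : ℕ → ℕ by g(n) := ∑_{k=0}^{n+c} f(k). Then for all n ∈ ℕ, ∑_{k=n}^∞ g(k)·2^{−k} = 2^{−n+1}·∑_{k=0}^{n+c−1} f(k) + 2^{c+1}·∑_{k=n+c}^∞ f(k)·2^{−k}; in particular the series ∑_{k=0}^∞ g(k)·2^{−k} converges. Moreover, if ∑_{k=0}^∞ f(k)·2^{−k} converges computably, then ∑_{k=0}^∞ g(k)·2^{−k} converges computably as well. -/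
open Filter

/-!
Writing `b n = ∑_{k ≤ n+c} a k`, each `b (n+k)` is `A = ∑_{k < n+c} a k` plus `∑_{i ≤ k} a (n+c+i)`.
The constant `A` contributes `2^{-n+1} A`; the partial sums, weighted by `2^{-k}`, form the Cauchy
product of `∑ a (n+c+i) 2^{-i}` with `∑ 2^{-k} = 2`, which gives the second term of the tail formula.

A modulus `s` for `∑ a k 2^{-k}` (with sum `x`) bounds its tails: `T j ≤ 2^{-n}` for `j ≥ s n`.
In the tail formula at `m` the term `2^{c+1} T (m+c)` is then small, and splitting the sum `A`
at `p = s (n+c+3)` gives `A ≤ 2^p x + 2^{m+c} T p`. So `m ≥ p + X + n + 2`, where `x ≤ 2^X`,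
puts the tail below `2^{-n}`.
-/

section

open Finset

theorem hasSum_sum_range_succ_mul_pow {𝕜 : Type*} [NormedField 𝕜] [CompleteSpace 𝕜]
    {a : ℕ → 𝕜} {r : 𝕜} (hr : ‖r‖ < 1) (ha : Summable fun i => ‖a i * r ^ i‖) :
    HasSum (fun n => (∑ i ∈ range (n + 1), a i) * r ^ n) ((∑' i, a i * r ^ i) * (1 - r)⁻¹) := by
  have h := hasSum_sum_range_mul_of_summable_norm ha (summable_norm_geometric_of_norm_lt_one hr)
  rw [tsum_geometric_of_norm_lt_one hr] at h
  refine h.congr_fun fun n => ?_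
  rw [sum_mul]
  refine sum_congr rfl fun i hi => ?_
  rw [mul_assoc, ← pow_add, Nat.add_sub_cancel' (Nat.lt_succ_iff.mp (mem_range.mp hi))]

theorem two_pow_mul_inv_pow (n : ℕ) : (2:ℝ) ^ n * 2⁻¹ ^ n = 1 := by
  rw [← mul_pow]; norm_num

theorem hasSum_tail_mul_two_zpow_of_eq_sum_range {a b : ℕ → ℝ}
    (ha : Summable fun k => a k * 2 ^ (-(k:ℤ))) {c : ℕ}
    (hb : ∀ n, b n = ∑ k ∈ range (n + c + 1), a k) (n : ℕ) :
    HasSum (fun k => b (n + k) * 2 ^ (-((n + k : ℕ) : ℤ)))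
      (2 ^ (-(n:ℤ) + 1) * ∑ k ∈ range (n + c), a k +
        2 ^ ((c:ℤ) + 1) * ∑' k, a (n + c + k) * 2 ^ (-((n + c + k : ℕ) : ℤ))) := by
  simp only [zpow_neg, zpow_natCast, ← inv_pow] at ha ⊢
  set A := ∑ k ∈ range (n + c), a k
  set T := ∑' k, a (n + c + k) * 2⁻¹ ^ k
  have hshift : Summable fun k => ‖a (n + c + k) * 2⁻¹ ^ k‖ := by
    refine summable_norm_iff.mpr ?_
    refine (((summable_nat_add_iff (n + c)).mpr ha).mul_left (2 ^ (n + c))).congr fun k => ?_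
    rw [add_comm k, pow_add]
    linear_combination (a (n + c + k) * 2⁻¹ ^ k) * two_pow_mul_inv_pow (n + c)
  have hgeom : HasSum (fun k => A * 2⁻¹ ^ k) (A * 2) := by
    simpa using hasSum_geometric_two.mul_left A
  have hpartial := hasSum_sum_range_succ_mul_pow (by norm_num) hshift
  have htail : ∑' k, a (n + c + k) * 2⁻¹ ^ (n + c + k) = 2⁻¹ ^ (n + c) * T := by
    rw [← tsum_mul_left]; congr 1; ext k; ring
  have hvalue : 2 ^ (-(n:ℤ) + 1) * A + 2 ^ ((c:ℤ) + 1) * (2⁻¹ ^ (n + c) * T) =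
      2⁻¹ ^ n * (A * 2 + T * (1 - 2⁻¹)⁻¹) := by
    rw [show ((1:ℝ) - 2⁻¹)⁻¹ = 2 by norm_num, zpow_add₀ two_ne_zero, zpow_add₀ two_ne_zero,
      zpow_neg, zpow_natCast, zpow_natCast, zpow_one, ← inv_pow, pow_add]
    linear_combination (2 * 2⁻¹ ^ n * T) * two_pow_mul_inv_pow c
  rw [htail, hvalue]
  refine ((hgeom.add hpartial).mul_left (2⁻¹ ^ n)).congr_fun fun k => ?_
  rw [hb, show n + k + c + 1 = n + c + (k + 1) by ring, sum_range_add, pow_add]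
  ring

theorem Summable.tsum_sub_sum_range {a : ℕ → ℝ} (ha : Summable a) (m : ℕ) :
    ∑' k, a k - ∑ k ∈ range m, a k = ∑' k, a (m + k) := by
  rw [← ha.sum_add_tsum_nat_add m]
  simp only [add_comm _ m, add_sub_cancel_left]

theorem eq_tsum_of_abs_sub_sum_range_le {a : ℕ → ℝ} (ha : Summable a) {x : ℝ} {s : ℕ → ℕ}
    (hs : ∀ n : ℕ, ∀ m ≥ s n, |x - ∑ k ∈ range m, a k| ≤ (2:ℝ) ^ (-(n:ℤ))) :
    x = ∑' k, a k := by
  refine tendsto_nhds_unique (Metric.tendsto_atTop.mpr fun ε hε => ?_) ha.hasSum.tendsto_sum_nat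
  obtain ⟨n, hn⟩ := exists_pow_lt_of_lt_one hε (by norm_num : (2⁻¹:ℝ) < 1)
  refine ⟨s n, fun m hm => ?_⟩
  rw [Real.dist_eq, abs_sub_comm]
  exact (hs n m hm).trans_lt (by simpa using hn)

theorem convergesComputably_iff_tail {a : ℕ → ℝ} (ha : Summable a) :
    ConvergesComputably a ↔
      ∃ s : ℕ → ℕ, Computable s ∧ ∀ n : ℕ, ∀ m ≥ s n, |∑' k, a (m + k)| ≤ (2:ℝ) ^ (-(n:ℤ)) := by
  simp only [← ha.tsum_sub_sum_range]
  constructor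
  · rintro ⟨x, s, hsc, hs⟩
    exact ⟨s, hsc, eq_tsum_of_abs_sub_sum_range_le ha hs ▸ hs⟩
  · rintro ⟨s, hsc, hs⟩
    exact ⟨_, s, hsc, hs⟩

theorem sum_range_le_two_pow_mul_tsum_add {a : ℕ → ℝ} (ha0 : ∀ k, 0 ≤ a k)
    (ha : Summable fun k => a k * 2 ^ (-(k:ℤ))) {p N : ℕ} (hpN : p ≤ N) :
    ∑ k ∈ range N, a k ≤
      2 ^ p * ∑' k, a k * 2 ^ (-(k:ℤ)) + 2 ^ N * ∑' k, a (p + k) * 2 ^ (-((p + k : ℕ) : ℤ)) := by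
  have hterm0 : ∀ k, 0 ≤ a k * 2 ^ (-(k:ℤ)) := fun k => mul_nonneg (ha0 k) (by positivity)
  have hle {k M : ℕ} (hkM : k ≤ M) : a k ≤ 2 ^ M * (a k * 2 ^ (-(k:ℤ))) :=
    calc a k = 2 ^ k * (a k * 2 ^ (-(k:ℤ))) := by rw [zpow_neg, zpow_natCast]; field_simp
      _ ≤ 2 ^ M * (a k * 2 ^ (-(k:ℤ))) := by gcongr; exacts [hterm0 k, one_le_two]
  rw [← sum_range_add_sum_Ico _ hpN, sum_Ico_eq_sum_range]
  gcongr
  · calc ∑ k ∈ range p, a k ≤ ∑ k ∈ range p, 2 ^ p * (a k * 2 ^ (-(k:ℤ))) :=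
          sum_le_sum fun k hk => hle (mem_range.mp hk).le
      _ ≤ 2 ^ p * ∑' k, a k * 2 ^ (-(k:ℤ)) := by
          rw [← mul_sum]; gcongr; exact ha.sum_le_tsum _ fun k _ => hterm0 k
  · calc ∑ k ∈ range (N - p), a (p + k)
          ≤ ∑ k ∈ range (N - p), 2 ^ N * (a (p + k) * 2 ^ (-((p + k : ℕ) : ℤ))) :=
          sum_le_sum fun k hk => hle (by have := mem_range.mp hk; omega)
      _ ≤ 2 ^ N * ∑' k, a (p + k) * 2 ^ (-((p + k : ℕ) : ℤ)) := by
          rw [← mul_sum]; gcongr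
          exact ((summable_nat_add_iff p).mpr ha |>.congr fun k => by rw [add_comm]).sum_le_tsum _
            fun k _ => hterm0 (p + k)

theorem summable_mul_two_zpow_of_eq_sum_range {a b : ℕ → ℝ}
    (ha : Summable fun k => a k * 2 ^ (-(k:ℤ))) {c : ℕ}
    (hb : ∀ n, b n = ∑ k ∈ range (n + c + 1), a k) :
    Summable fun k => b k * 2 ^ (-(k:ℤ)) := by
  simpa using (hasSum_tail_mul_two_zpow_of_eq_sum_range ha hb 0).summable

theorem ConvergesComputably.of_eq_sum_range {a b : ℕ → ℝ} (ha0 : ∀ k, 0 ≤ a k)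
    (ha : Summable fun k => a k * 2 ^ (-(k:ℤ))) {c : ℕ}
    (hb : ∀ n, b n = ∑ k ∈ range (n + c + 1), a k)
    (h : ConvergesComputably fun k => a k * 2 ^ (-(k:ℤ))) :
    ConvergesComputably fun k => b k * 2 ^ (-(k:ℤ)) := by
  rw [convergesComputably_iff_tail ha] at h
  rw [convergesComputably_iff_tail (summable_mul_two_zpow_of_eq_sum_range ha hb)]
  obtain ⟨s, hsc, hs⟩ := h
  set T : ℕ → ℝ := fun j => ∑' k, a (j + k) * 2 ^ (-((j + k : ℕ) : ℤ))
  have hT0 : ∀ j, 0 ≤ T j := fun j => tsum_nonneg fun k => mul_nonneg (ha0 _) (by positivity)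
  have hT : ∀ n j, s n ≤ j → T j ≤ 2 ^ (-(n:ℤ)) := fun n j hj => (le_abs_self _).trans (hs n j hj)
  obtain ⟨X, hX⟩ : ∃ X : ℕ, ∑' k, a k * 2 ^ (-(k:ℤ)) ≤ 2 ^ X :=
    (pow_unbounded_of_one_lt _ one_lt_two).imp fun _ => le_of_lt
  have hcomp : Computable fun n => s (n + c + 3) + (n + X + 2) := by
    have hadd (d : ℕ) : Primrec (· + d) := Primrec.nat_add.comp Primrec.id (Primrec.const d)
    exact Primrec.nat_add.to_comp.comp (hsc.comp ((hadd 3).comp (hadd c)).to_comp)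
      (hadd 2 |>.comp (hadd X)).to_comp
  refine ⟨_, hcomp, fun n m hm => ?_⟩
  set p := s (n + c + 3)
  have h2 : (2:ℝ) ≠ 0 := two_ne_zero
  have hA := sum_range_le_two_pow_mul_tsum_add ha0 ha (p := p) (N := m + c) (by omega)
  rw [(hasSum_tail_mul_two_zpow_of_eq_sum_range ha hb m).tsum_eq,
    abs_of_nonneg (by positivity [sum_nonneg fun k (_ : k ∈ range (m + c)) => ha0 k, hT0 (m + c)])]
  calc 2 ^ (-(m:ℤ) + 1) * ∑ k ∈ range (m + c), a k + 2 ^ ((c:ℤ) + 1) * T (m + c)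
      ≤ 2 ^ (-(m:ℤ) + 1) * (2 ^ p * 2 ^ X + 2 ^ (m + c) * T p) + 2 ^ ((c:ℤ) + 1) * T (m + c) := by
        gcongr
        exact hA.trans (by gcongr)
    _ = 2 ^ (-(m:ℤ) + 1 + p + X) + 2 ^ ((c:ℤ) + 1) * (T p + T (m + c)) := by
        simp only [zpow_add₀ h2, zpow_neg, zpow_natCast, zpow_one, pow_add]
        field_simp
        ring
    _ ≤ 2 ^ (-(n:ℤ) - 1) + 2 ^ ((c:ℤ) + 1) *
          (2 ^ (-((n + c + 3 : ℕ) : ℤ)) + 2 ^ (-((n + c + 3 : ℕ) : ℤ))) := by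
        gcongr
        · exact one_le_two
        · omega
        · exact hT _ _ le_rfl
        · exact hT _ _ (by omega)
    _ = 2 ^ (-(n:ℤ)) := by
        simp only [zpow_add₀ h2, zpow_sub₀ h2, zpow_neg, zpow_natCast, zpow_one, Nat.cast_add]
        field_simp
        ring

end

/-- tail formula for `∑ g(k)·2^{-k}` where `g n = ∑_{k ≤ n+c} f k`,
convergence of that series, and preservation of computable convergence. -/
theorem stmt6 (f : ℕ → ℕ) (hf : Summable (fun k => (f k : ℝ) * (2:ℝ)^(-(k:ℤ))))
    (c : ℕ) (g : ℕ → ℕ) (hg : ∀ n : ℕ, g n = ∑ k ∈ Finset.range (n + c + 1), f k) :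
    (∀ n : ℕ,
      (∑' k : ℕ, (g (n + k) : ℝ) * (2:ℝ)^(-((n + k : ℕ) : ℤ))) =
        (2:ℝ)^(-(n:ℤ) + 1) * (∑ k ∈ Finset.range (n + c), (f k : ℝ)) +
        (2:ℝ)^((c:ℤ) + 1) * ∑' k : ℕ, (f (n + c + k) : ℝ) * (2:ℝ)^(-((n + c + k : ℕ) : ℤ))) ∧
    Summable (fun k => (g k : ℝ) * (2:ℝ)^(-(k:ℤ))) ∧
    (ConvergesComputably (fun k => (f k : ℝ) * (2:ℝ)^(-(k:ℤ))) →
      ConvergesComputably (fun k => (g k : ℝ) * (2:ℝ)^(-(k:ℤ)))) := by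
  have hg' : ∀ n, (g n : ℝ) = ∑ k ∈ Finset.range (n + c + 1), (f k : ℝ) := fun n => by
    rw [hg]; push_cast; rfl
  exact ⟨fun n => (hasSum_tail_mul_two_zpow_of_eq_sum_range hf hg' n).tsum_eq,
    summable_mul_two_zpow_of_eq_sum_range hf hg',
    ConvergesComputably.of_eq_sum_range (fun k => Nat.cast_nonneg (f k)) hf hg'⟩
end

section
/- If x and y are reordered computable real numbers, then the product x · y is reordered computable. -/
open Filter

/-!
If `f` and `g` are names of `x` and `y`, then `(i, j) ↦ f i + g j`, enumerated along
`Nat.pair`, is a name of `x * y`. Its fibre sizes are the convolution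
`u(n) = ∑_{i+j=n} u_f(i) u_g(j)`, so its weighted series `∑ u(n) 2^{-n}` is the Cauchy
product of the weighted series of `f` and `g`. For nonnegative series the partial sums of a
Cauchy product up to `2p` lie between the product of the partial sums up to `p` and the
product `A * B` of the limits; hence moduli `sa`, `sb` of the factors give the modulus
`n ↦ 2 * max (sa (n + k)) (sb (n + k))` of the product, for any `k` with `A + B ≤ 2^k`.
-/

open Finset Topology

section CauchyProduct

theorem sum_range_sum_antidiagonal {M : Type*} [AddCommMonoid M] (c : ℕ × ℕ → M) (m : ℕ) :
    ∑ k ∈ range m, ∑ p ∈ antidiagonal k, c p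
      = ∑ p ∈ range m ×ˢ range m with p.1 + p.2 < m, c p := by
  rw [← sum_fiberwise_of_maps_to (g := fun p : ℕ × ℕ => p.1 + p.2) (t := range m)
    (fun p hp => by simpa using (mem_filter.1 hp).2)]
  refine sum_congr rfl fun k hk => sum_congr ?_ fun _ _ => rfl
  ext ⟨i, j⟩
  simp only [HasAntidiagonal.mem_antidiagonal, mem_filter, mem_product, mem_range] at hk ⊢
  omega

variable {R : Type*} [CommSemiring R] [PartialOrder R] [IsOrderedRing R]
  {a b : ℕ → R}

theorem sum_range_sum_antidiagonal_le_mul (ha : ∀ i, 0 ≤ a i) (hb : ∀ j, 0 ≤ b j)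
    (m : ℕ) :
    ∑ k ∈ range m, ∑ p ∈ antidiagonal k, a p.1 * b p.2
      ≤ (∑ i ∈ range m, a i) * ∑ j ∈ range m, b j := by
  rw [sum_range_sum_antidiagonal, sum_mul_sum, ← sum_product']
  exact sum_le_sum_of_subset_of_nonneg (filter_subset _ _)
    fun p _ _ => mul_nonneg (ha p.1) (hb p.2)

theorem mul_le_sum_range_sum_antidiagonal (ha : ∀ i, 0 ≤ a i) (hb : ∀ j, 0 ≤ b j)
    {m n : ℕ} (hnm : 2 * n ≤ m) :
    (∑ i ∈ range n, a i) * ∑ j ∈ range n, b j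
      ≤ ∑ k ∈ range m, ∑ p ∈ antidiagonal k, a p.1 * b p.2 := by
  rw [sum_range_sum_antidiagonal, sum_mul_sum, ← sum_product']
  refine sum_le_sum_of_subset_of_nonneg (fun p hp => ?_)
    fun p _ _ => mul_nonneg (ha p.1) (hb p.2)
  simp only [mem_filter, mem_product, mem_range] at hp ⊢
  omega

end CauchyProduct

section ConvergesComputably

variable {a b : ℕ → ℝ}

theorem tendsto_sum_range_of_modulus {A : ℝ} {s : ℕ → ℕ}
    (hs : ∀ n : ℕ, ∀ m ≥ s n, |A - ∑ k ∈ range m, a k| ≤ (2:ℝ)^(-(n:ℤ))) :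
    Tendsto (fun m => ∑ k ∈ range m, a k) atTop (𝓝 A) := by
  refine Metric.tendsto_atTop.2 fun ε hε => ?_
  obtain ⟨n, hn⟩ := exists_pow_lt_of_lt_one hε one_half_lt_one
  refine ⟨s n, fun m hm => ?_⟩
  rw [Real.dist_eq, abs_sub_comm]
  calc |A - ∑ k ∈ range m, a k| ≤ (2:ℝ)^(-(n:ℤ)) := hs n m hm
    _ = (1 / 2) ^ n := by rw [zpow_neg, zpow_natCast, one_div, inv_pow]
    _ < ε := hn

theorem ConvergesComputably.cauchyProduct (ha0 : ∀ i, 0 ≤ a i) (hb0 : ∀ j, 0 ≤ b j)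
    (ha : ConvergesComputably a) (hb : ConvergesComputably b) :
    ConvergesComputably (fun n => ∑ p ∈ antidiagonal n, a p.1 * b p.2) := by
  obtain ⟨A, sa, hsa_comp, hsa⟩ := ha
  obtain ⟨B, sb, hsb_comp, hsb⟩ := hb
  have hA : HasSum a A :=
    (hasSum_iff_tendsto_nat_of_nonneg ha0 A).2 (tendsto_sum_range_of_modulus hsa)
  have hB : HasSum b B :=
    (hasSum_iff_tendsto_nat_of_nonneg hb0 B).2 (tendsto_sum_range_of_modulus hsb)
  obtain ⟨k, hk⟩ := pow_unbounded_of_one_lt (A + B) one_lt_two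
  have hshift : Computable (fun n => n + k) :=
    Primrec.nat_add.to_comp.comp Computable.id (Computable.const k)
  refine ⟨A * B, fun n => 2 * max (sa (n + k)) (sb (n + k)),
    Primrec.nat_mul.to_comp.comp (Computable.const 2)
      (Primrec.nat_max.to_comp.comp (hsa_comp.comp hshift) (hsb_comp.comp hshift)),
    fun n m hm => ?_⟩
  set p := max (sa (n + k)) (sb (n + k))
  set e : ℝ := (2:ℝ)^(-((n + k : ℕ) : ℤ))
  have hSa : ∀ m, ∑ i ∈ range m, a i ≤ A := fun m => sum_le_hasSum _ (fun i _ => ha0 i) hA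
  have hSb : ∀ m, ∑ j ∈ range m, b j ≤ B := fun m => sum_le_hasSum _ (fun j _ => hb0 j) hB
  have hea : A - ∑ i ∈ range p, a i ≤ e := (le_abs_self _).trans (hsa _ _ (le_max_left _ _))
  have heb : B - ∑ j ∈ range p, b j ≤ e := (le_abs_self _).trans (hsb _ _ (le_max_right _ _))
  have hupper := (sum_range_sum_antidiagonal_le_mul ha0 hb0 m).trans
    (mul_le_mul (hSa m) (hSb m) (sum_nonneg fun j _ => hb0 j) (hA.nonneg ha0))
  have hlower := mul_le_sum_range_sum_antidiagonal ha0 hb0 hm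
  rw [abs_of_nonneg (sub_nonneg.2 hupper)]
  calc A * B - ∑ k ∈ range m, ∑ p ∈ antidiagonal k, a p.1 * b p.2
      ≤ A * (B - ∑ j ∈ range p, b j)
          + (A - ∑ i ∈ range p, a i) * ∑ j ∈ range p, b j := by
        linarith
    _ ≤ A * e + e * B := by
        gcongr
        · exact hA.nonneg ha0
        · exact sum_nonneg fun j _ => hb0 j
        · exact hSb p
    _ = (A + B) * e := by ring
    _ ≤ 2 ^ k * e := by gcongr
    _ = (2:ℝ)^(-(n:ℤ)) := by
        rw [← zpow_natCast, ← zpow_add₀ two_ne_zero]; push_cast; ring_nf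

end ConvergesComputably

theorem Nat.card_add_fiber_eq_sum_antidiagonal {α β M : Type*} [AddMonoid M]
    [HasAntidiagonal M] (f : α → M) (g : β → M) [∀ a, Finite {i // f i = a}]
    [∀ b, Finite {j // g j = b}] (n : M) :
    Nat.card {q : α × β // f q.1 + g q.2 = n}
      = ∑ p ∈ antidiagonal n, Nat.card {i // f i = p.1} * Nat.card {j // g j = p.2} := by
  let e : {q : α × β // f q.1 + g q.2 = n}
      ≃ Σ p : antidiagonal n, {i // f i = p.1.1} × {j // g j = p.1.2} :=
    { toFun := fun q => ⟨⟨(f q.1.1, g q.1.2), HasAntidiagonal.mem_antidiagonal.2 q.2⟩,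
        ⟨q.1.1, rfl⟩, ⟨q.1.2, rfl⟩⟩
      invFun := fun r => ⟨(r.2.1.1, r.2.2.1), by
        rw [r.2.1.2, r.2.2.2]; exact HasAntidiagonal.mem_antidiagonal.1 r.1.2⟩
      left_inv := fun q => rfl
      right_inv := by
        rintro ⟨⟨⟨_, _⟩, _⟩, ⟨_, hi⟩, ⟨_, hj⟩⟩
        dsimp only at hi hj
        subst hi hj
        rfl }
  rw [Nat.card_congr e, Nat.card_sigma, ← sum_coe_sort (antidiagonal n)]
  simp only [Nat.card_prod]

def mulName (f g : ℕ → ℕ) (m : ℕ) : ℕ := f m.unpair.1 + g m.unpair.2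

theorem Computable.mulName {f g : ℕ → ℕ} (hf : Computable f) (hg : Computable g) :
    Computable (mulName f g) :=
  Primrec.nat_add.to_comp.comp (hf.comp (Computable.fst.comp Computable.unpair))
    (hg.comp (Computable.snd.comp Computable.unpair))

section IsName

variable {f g : ℕ → ℕ} {x y : ℝ}

theorem IsName.finite_fiber (hf : IsName f x) (n : ℕ) : Finite {k // f k = n} := by
  have hsmall : ∀ᶠ k in cofinite, (2:ℝ)^(-(f k : ℤ)) < (2:ℝ)^(-(n:ℤ)) :=
    hf.summable.tendsto_cofinite_zero.eventually (gt_mem_nhds (by positivity))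
  exact Set.Finite.to_subtype ((Filter.eventually_cofinite.1 hsmall).subset
    fun k (hk : f k = n) hlt => lt_irrefl _ (hk ▸ hlt))

theorem IsName.mul (hf : IsName f x) (hg : IsName g y) : IsName (mulName f g) (x * y) := by
  have hprod := HasSum.mul hf hg (hf.summable.mul_of_nonneg hg.summable
    (fun _ => by positivity) (fun _ => by positivity))
  have hterm : (fun m => (2:ℝ)^(-(mulName f g m : ℤ)))
      = (fun q : ℕ × ℕ => (2:ℝ)^(-(f q.1 : ℤ)) * (2:ℝ)^(-(g q.2 : ℤ)))
          ∘ Nat.pairEquiv.symm := by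
    funext m
    simp only [Function.comp_apply, Nat.pairEquiv_symm_apply, mulName, Nat.cast_add, neg_add,
      zpow_add₀ (two_ne_zero (α := ℝ))]
  rw [IsName, hterm, Equiv.hasSum_iff]
  exact hprod

theorem uf_mulName (hf : IsName f x) (hg : IsName g y) (n : ℕ) :
    uf (mulName f g) n = ∑ p ∈ antidiagonal n, uf f p.1 * uf g p.2 := by
  have := hf.finite_fiber
  have := hg.finite_fiber
  show Nat.card {m // mulName f g m = n}
    = ∑ p ∈ antidiagonal n, Nat.card {i // f i = p.1} * Nat.card {j // g j = p.2}
  rw [← Nat.card_add_fiber_eq_sum_antidiagonal f g n]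
  exact Nat.card_congr (Nat.pairEquiv.symm.subtypeEquiv fun m => Iff.rfl)

theorem uf_mulName_mul_two_zpow (hf : IsName f x) (hg : IsName g y) (n : ℕ) :
    (uf (mulName f g) n : ℝ) * 2^(-(n:ℤ))
      = ∑ p ∈ antidiagonal n,
          ((uf f p.1 : ℝ) * 2^(-(p.1:ℤ))) * ((uf g p.2 : ℝ) * 2^(-(p.2:ℤ))) := by
  rw [uf_mulName hf hg, Nat.cast_sum, sum_mul]
  refine sum_congr rfl fun p hp => ?_
  rw [← HasAntidiagonal.mem_antidiagonal.1 hp]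
  push_cast
  rw [neg_add, zpow_add₀ (two_ne_zero (α := ℝ))]
  ring

end IsName

/-- reordered computable reals are closed under multiplication. -/
theorem stmt9 (x y : ℝ) (hx : ReorderedComputable x) (hy : ReorderedComputable y) :
    ReorderedComputable (x * y) := by
  obtain ⟨f, hf_comp, hf, hf_conv⟩ := hx
  obtain ⟨g, hg_comp, hg, hg_conv⟩ := hy
  refine ⟨mulName f g, hf_comp.mulName hg_comp, hf.mul hg, ?_⟩
  have hprod :=
    hf_conv.cauchyProduct (fun _ => by positivity) (fun _ => by positivity) hg_conv
  rwa [funext (uf_mulName_mul_two_zpow hf hg)]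
end

section
/- Let f : ℕ → ℕ be a function such that the series ∑_{k=0}^∞ 2^{−f(k)} converges. Then limsup_{n→∞} (u_f(n))^{1/n} lies in the interval [1, 2]. -/
/-!
Each `k` with `f k = n` contributes `2^{-n}` to `S = ∑ 2^{-f k}`, so `u_f(n) ≤ S·2^n` and
`u_f(n)^{1/n} ≤ S^{1/n}·2 → 2`. Since the preimages are finite but cover all of `ℕ`,
`u_f(n) ≥ 1` for infinitely many `n`, which gives `limsup ≥ 1`.
-/

open Filter

open scoped NNReal ENNReal Topology

theorem finite_setOf_eq_of_summable_two_zpow {α : Type*} {f : α → ℕ}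
    (hf : Summable fun k => (2:ℝ) ^ (-(f k : ℤ))) (n : ℕ) : {k | f k = n}.Finite := by
  have hpos : (0:ℝ) < 2 ^ (-(n:ℤ)) := by positivity
  refine (hf.tendsto_cofinite_zero.eventually (gt_mem_nhds hpos)).subset ?_
  intro k (hk : f k = n)
  simp [hk]

theorem uf_mul_two_zpow_le_tsum {f : ℕ → ℕ} (hf : Summable fun k => (2:ℝ) ^ (-(f k : ℤ)))
    (n : ℕ) : (uf f n : ℝ) * 2 ^ (-(n:ℤ)) ≤ ∑' k, (2:ℝ) ^ (-(f k : ℤ)) := by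
  have hfin := finite_setOf_eq_of_summable_two_zpow hf n
  calc (uf f n : ℝ) * 2 ^ (-(n:ℤ)) = ∑ k ∈ hfin.toFinset, (2:ℝ) ^ (-(f k : ℤ)) := by
        rw [Finset.sum_congr rfl fun k hk => by rw [hfin.mem_toFinset.1 hk], Finset.sum_const,
          uf, Nat.card_eq_card_finite_toFinset hfin, nsmul_eq_mul]
    _ ≤ _ := hf.sum_le_tsum _ fun k _ => by positivity

theorem uf_le_tsum_mul_two_pow {f : ℕ → ℕ} (hf : Summable fun k => (2:ℝ) ^ (-(f k : ℤ)))
    (n : ℕ) : (uf f n : ℝ≥0∞) ≤ (∑' k, (2:ℝ) ^ (-(f k : ℤ))).toNNReal * 2 ^ n := by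
  have h := uf_mul_two_zpow_le_tsum hf n
  rw [zpow_neg, zpow_natCast, ← div_eq_mul_inv, div_le_iff₀ (by positivity)] at h
  calc (uf f n : ℝ≥0∞) = ENNReal.ofReal (uf f n) := (ENNReal.ofReal_natCast _).symm
    _ ≤ ENNReal.ofReal ((∑' k, (2:ℝ) ^ (-(f k : ℤ))) * 2 ^ n) := ENNReal.ofReal_le_ofReal h
    _ = _ := by
        rw [ENNReal.ofReal_mul (tsum_nonneg fun k => by positivity),
          ENNReal.ofReal_pow zero_le_two, ENNReal.ofReal_ofNat]
        rfl

theorem infinite_setOf_uf_ne_zero {f : ℕ → ℕ} (hfin : ∀ n, {k | f k = n}.Finite) :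
    {n | uf f n ≠ 0}.Infinite := by
  intro h
  refine Set.infinite_univ ((h.preimage' fun n _ => hfin n).subset fun k _ => ?_)
  have := (hfin (f k)).to_subtype
  exact Nat.card_ne_zero.2 ⟨⟨⟨k, rfl⟩⟩, inferInstance⟩

theorem ENNReal.tendsto_coe_rpow_one_div_natCast {C : ℝ≥0} (hC : C ≠ 0) :
    Tendsto (fun n : ℕ => (C : ℝ≥0∞) ^ (1 / (n : ℝ))) atTop (𝓝 1) := by
  have hreal : Tendsto (fun n : ℕ => (C : ℝ) ^ (1 / (n : ℝ))) atTop (𝓝 1) := by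
    simpa [Function.comp_def] using
      (Real.continuousAt_const_rpow (b := 0) (NNReal.coe_ne_zero.2 hC)).tendsto.comp
        tendsto_one_div_atTop_nhds_zero_nat
  have hnn : Tendsto (fun n : ℕ => C ^ (1 / (n : ℝ))) atTop (𝓝 1) := by
    rw [← NNReal.tendsto_coe]; simpa using hreal
  simpa [ENNReal.coe_rpow_of_ne_zero hC] using ENNReal.tendsto_coe.2 hnn

theorem one_le_rootLimsup {a : ℕ → ℕ} (h : {n | a n ≠ 0}.Infinite) : 1 ≤ rootLimsup a := by
  refine le_limsup_of_frequently_le' ?_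
  rw [← Nat.cofinite_eq_atTop]
  refine h.frequently_cofinite.mono fun n hn => ?_
  calc (1 : ℝ≥0∞) = 1 ^ (1 / (n : ℝ)) := (ENNReal.one_rpow _).symm
    _ ≤ (a n : ℝ≥0∞) ^ (1 / (n : ℝ)) := by
        gcongr
        exact_mod_cast Nat.one_le_iff_ne_zero.2 hn

theorem rootLimsup_le_of_le_mul_pow {a : ℕ → ℕ} {C : ℝ≥0} {r : ℝ≥0∞}
    (h : ∀ n, (a n : ℝ≥0∞) ≤ C * r ^ n) : rootLimsup a ≤ r := by
  -- `C + 1` rather than `C`: for `C = 0` the roots `C^{1/n}` tend to `0`, not `1`.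
  have hlim := ENNReal.Tendsto.mul_const (b := r)
    (ENNReal.tendsto_coe_rpow_one_div_natCast (C := C + 1) (by simp)) (.inl one_ne_zero)
  rw [one_mul] at hlim
  refine (limsup_le_limsup ?_).trans_eq hlim.limsup_eq
  filter_upwards [eventually_ne_atTop 0] with n hn
  calc (a n : ℝ≥0∞) ^ (1 / (n : ℝ)) ≤ (((C + 1 : ℝ≥0) : ℝ≥0∞) * r ^ n) ^ (1 / (n : ℝ)) := by
        gcongr
        exact (h n).trans (by gcongr; exact_mod_cast le_self_add)
    _ = ((C + 1 : ℝ≥0) : ℝ≥0∞) ^ (1 / (n : ℝ)) * r := by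
        rw [ENNReal.mul_rpow_of_nonneg _ _ (by positivity), one_div,
          ENNReal.pow_rpow_inv_natCast hn]

/-- if `∑ 2^{-f(k)}` converges, then `limsup (uf f n)^{1/n} ∈ [1,2]`. -/
theorem stmt14 (f : ℕ → ℕ) (hf : Summable (fun k => (2:ℝ)^(-(f k : ℤ)))) :
    1 ≤ rootLimsup (uf f) ∧ rootLimsup (uf f) ≤ 2 :=
  ⟨one_le_rootLimsup (infinite_setOf_uf_ne_zero (finite_setOf_eq_of_summable_two_zpow hf)),
    rootLimsup_le_of_le_mul_pow (uf_le_tsum_mul_two_pow hf)⟩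
end

section
/- Let f : ℕ → ℕ be a computable function which tends to infinity and satisfies limsup_{n→∞} (u_f(n))^{1/n} < 2. Then the series ∑_{k=0}^∞ 2^{−f(k)} converges and its limit is a reordered computable real number. -/
/-!
Because every fibre of `f` is finite, `∑ₖ 2^{-f k}` regroups fibrewise into `∑ₙ u_f(n) 2^{-n}`.
The root bound gives `ρ < 2` with `u_f(n) ≤ ρⁿ` eventually, so the terms of the regrouped series
are eventually at most `qⁿ` with `q = ρ/2 < 1`. Its tail after `m` terms is then at most
`qᵐ/(1-q)`, which drops below `2^{-n}` once `m` exceeds an affine function of `n`: a computable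
modulus.
-/

open Filter

open scoped NNReal ENNReal

theorem TendsToInfinity.finite_preimage_singleton {f : ℕ → ℕ} (hf : TendsToInfinity f) (n : ℕ) :
    (f ⁻¹' {n}).Finite := by
  obtain ⟨m, hm⟩ := hf n
  refine (Set.finite_Iio m).subset fun k hk => ?_
  by_contra! hmk
  exact (hm k (not_lt.mp hmk)).ne' hk

theorem exists_eventually_le_pow_of_rootLimsup_lt {a : ℕ → ℕ} {r : ℝ≥0∞} (h : rootLimsup a < r) :
    ∃ ρ : ℝ≥0, (ρ : ℝ≥0∞) < r ∧ ∀ᶠ n in atTop, (a n : ℝ) ≤ ρ ^ n := by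
  obtain ⟨c, hac, hcr⟩ := exists_between h
  have hc : c ≠ ∞ := (hcr.trans_le le_top).ne
  refine ⟨c.toNNReal, by rwa [ENNReal.coe_toNNReal hc], ?_⟩
  filter_upwards [eventually_lt_of_limsup_lt hac, eventually_ne_atTop 0] with n hn hn0
  have : (a n : ℝ≥0∞) ≤ c ^ n := by
    rw [← ENNReal.rpow_inv_natCast_pow hn0 (a n)]
    exact pow_le_pow_left₀ bot_le (by simpa only [one_div] using hn.le) n
  rw [← ENNReal.coe_toNNReal hc] at this
  exact_mod_cast this

theorem hasSum_comp_of_hasSum_card_preimage_mul {α β : Type*} {f : α → β} {w : β → ℝ}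
    (hfin : ∀ b, (f ⁻¹' {b}).Finite) (hw : ∀ b, 0 ≤ w b) {x : ℝ}
    (h : HasSum (fun b => Nat.card (f ⁻¹' {b}) * w b) x) : HasSum (w ∘ f) x := by
  have hfiber : ∀ b, ∑' a : f ⁻¹' {b}, w (f a) = Nat.card (f ⁻¹' {b}) * w b := fun b => by
    rw [tsum_congr fun a : f ⁻¹' {b} => congrArg w a.2, tsum_const, nsmul_eq_mul]
  have hsum : Summable (w ∘ f) := by
    refine (summable_partition (fun a => hw (f a)) (s := fun b => f ⁻¹' {b})
      fun a => ⟨f a, rfl, fun b hb => hb.symm⟩).mpr ⟨fun b => ?_, ?_⟩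
    · have := (hfin b).to_subtype
      exact Summable.of_finite
    · simpa only [Function.comp_apply, hfiber] using h.summable
  have := hsum.hasSum.tsum_fiberwise f
  simp only [Function.comp_apply, hfiber] at this
  rw [h.unique this]
  exact hsum.hasSum

theorem exists_computable_modulus_geometric {q : ℝ} (hq0 : 0 ≤ q) (hq1 : q < 1) (N : ℕ) :
    ∃ s : ℕ → ℕ, Computable s ∧
      ∀ n, ∀ m ≥ s n, N ≤ m ∧ q ^ m / (1 - q) ≤ (2:ℝ) ^ (-(n:ℤ)) := by
  obtain ⟨a, ha⟩ := exists_pow_lt_of_lt_one (by norm_num : (0:ℝ) < 2⁻¹) hq1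
  obtain ⟨b, hb⟩ := exists_pow_lt_of_lt_one (sub_pos.mpr hq1) hq1
  refine ⟨fun n => max b N + a * n,
    (Primrec.nat_add.comp (Primrec.const _)
      (Primrec.nat_mul.comp (Primrec.const a) Primrec.id)).to_comp,
    fun n m (hm : max b N + a * n ≤ m) => ⟨by omega, ?_⟩⟩
  rw [div_le_iff₀ (sub_pos.mpr hq1), zpow_neg, zpow_natCast, ← inv_pow]
  calc q ^ m ≤ q ^ (b + a * n) := pow_le_pow_of_le_one hq0 hq1.le (by omega)
    _ = q ^ b * (q ^ a) ^ n := by rw [pow_add, pow_mul]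
    _ ≤ (1 - q) * 2⁻¹ ^ n := by gcongr
    _ = 2⁻¹ ^ n * (1 - q) := mul_comm _ _

theorem convergesComputably_of_eventually_abs_le_geometric {g : ℕ → ℝ} {q : ℝ} (hq0 : 0 ≤ q)
    (hq1 : q < 1) (hg : ∀ᶠ n in atTop, |g n| ≤ q ^ n) : ConvergesComputably g := by
  obtain ⟨N, hN⟩ := eventually_atTop.mp hg
  obtain ⟨s, hs, hsN⟩ := exists_computable_modulus_geometric hq0 hq1 N
  have hsum : Summable g :=
    (summable_geometric_of_lt_one hq0 hq1).of_norm_bounded_eventually_nat (f := g) hg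
  refine ⟨∑' k, g k, s, hs, fun n m hm => ?_⟩
  obtain ⟨hNm, hqm⟩ := hsN n m hm
  have htail : |∑' i, g (i + m)| ≤ q ^ m / (1 - q) := by
    refine tsum_of_norm_bounded (f := fun i => g (i + m))
      ((hasSum_geometric_of_lt_one hq0 hq1).mul_left (q ^ m)) fun i => ?_
    simpa only [Real.norm_eq_abs, pow_add, mul_comm] using hN (i + m) (by omega)
  rw [← hsum.sum_add_tsum_nat_add m, add_sub_cancel_left]
  exact htail.trans (by rwa [div_eq_mul_inv] at hqm)

/-- if `f` is computable, tends to infinity and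
`limsup (uf f n)^{1/n} < 2`, then `∑ 2^{-f(k)}` converges and its limit is reordered
computable. -/
theorem stmt15 (f : ℕ → ℕ) (hc : Computable f) (hf : TendsToInfinity f)
    (h : rootLimsup (uf f) < 2) :
    ∃ x : ℝ, HasSum (fun k => (2:ℝ)^(-(f k : ℤ))) x ∧ ReorderedComputable x := by
  obtain ⟨ρ, hρ2, hρ⟩ := exists_eventually_le_pow_of_rootLimsup_lt h
  have hq0 : 0 ≤ (ρ : ℝ) / 2 := by positivity
  have hq1 : (ρ : ℝ) / 2 < 1 := by
    rw [div_lt_one two_pos]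
    exact_mod_cast hρ2
  have hg : ∀ᶠ n in atTop, |(uf f n : ℝ) * (2:ℝ) ^ (-(n:ℤ))| ≤ ((ρ : ℝ) / 2) ^ n :=
    hρ.mono fun n hn => by
      rw [abs_of_nonneg (by positivity), div_pow, zpow_neg, zpow_natCast, ← div_eq_mul_inv]
      gcongr
  have hsum : Summable fun n => (uf f n : ℝ) * (2:ℝ) ^ (-(n:ℤ)) :=
    (summable_geometric_of_lt_one hq0 hq1).of_norm_bounded_eventually_nat hg
  have hname : IsName f (∑' n, (uf f n : ℝ) * (2:ℝ) ^ (-(n:ℤ))) :=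
    hasSum_comp_of_hasSum_card_preimage_mul (w := fun n : ℕ => (2:ℝ) ^ (-(n:ℤ)))
      hf.finite_preimage_singleton (fun n => by positivity) hsum.hasSum
  exact ⟨_, hname, f, hc, hname, convergesComputably_of_eventually_abs_le_geometric hq0 hq1 hg⟩
end
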